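/- arXiv:1101.3503 — 5 statements merged into one kernel-verified Lean document; each statement's English description precedes it below -/
import Mathlib

section
/- Let 0 < G₀ ≤ G₁ ≤ 2G₀, η₀ > 0, and let G : (0,1) → ℝ be C¹ with G₀ ≤ G(x) ≤ G₁ and |G'(x)| ≤ η₀ for all x ∈ (0,1). Let O = (0,1) × (0,G₁), let O^G = {(x₁,x₂) : x₁ ∈ (0,1), 0 < x₂ < G(x₁)}, and let φ be a C¹ function on an open neighborhood of the closure of O^G. Define Pφ on O by Pφ(x₁,x₂) = φ(x₁,x₂) if x₂ < G(x₁) and Pφ(x₁,x₂) = φ(x₁, 2G(x₁) − x₂) if G(x₁) ≤ x₂ < G₁. Then for every p ∈ [1,∞): (i) ∫_O |∂₂(Pφ)|^p dx ≤ 2 ∫_{O^G} |∂₂φ|^p dx, and (ii) ∫_O |∂₁(Pφ)|^p dx ≤ 4^p ( ∫_{O^G} |∂₁φ|^p dx + η₀^p ∫_{O^G} |∂₂φ|^p dx ). -/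
open MeasureTheory Set

/-- First partial derivative of a function of two real variables. -/
noncomputable def pd1 (f : ℝ × ℝ → ℝ) (x : ℝ × ℝ) : ℝ := fderiv ℝ f x (1, 0)

/-- Second partial derivative of a function of two real variables. -/
noncomputable def pd2 (f : ℝ × ℝ → ℝ) (x : ℝ × ℝ) : ℝ := fderiv ℝ f x (0, 1)

/-!
Split `O` into `O^G` and the part above the graph of `G`; on `O^G` the extension is `φ` itself.
Above the graph, `Pφ` is `φ` composed with the reflection `(x₁, x₂) ↦ (x₁, 2G(x₁) − x₂)`,
which on each vertical line is a measure-preserving affine map sending `[G(x₁), G₁)` into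
`(0, G(x₁)]`, because `G₁ ≤ 2G₀ ≤ 2G(x₁)`. Tonelli then bounds the integral above the graph
by the integral over `O^G`. For `∂₁(Pφ)` one also needs the pointwise bound
`|a + 2G'b|^p ≤ 2^p |a|^p + 4^p η₀^p |b|^p` and `1 + 2^p ≤ 4^p`.
-/

open scoped ENNReal

section Real

variable {p : ℝ}

theorem add_rpow_le_two_rpow_mul_add_rpow {x y : ℝ} (hx : 0 ≤ x) (hy : 0 ≤ y) (hp : 0 ≤ p) :
    (x + y) ^ p ≤ 2 ^ p * (x ^ p + y ^ p) := by
  calc (x + y) ^ p ≤ (2 * max x y) ^ p := by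
        gcongr
        linarith [le_max_left x y, le_max_right x y]
    _ = 2 ^ p * max x y ^ p := Real.mul_rpow zero_le_two (le_max_of_le_left hx)
    _ ≤ 2 ^ p * (x ^ p + y ^ p) := by
        gcongr
        rcases le_total x y with hxy | hxy
        · rw [max_eq_right hxy]
          exact le_add_of_nonneg_left (by positivity)
        · rw [max_eq_left hxy]
          exact le_add_of_nonneg_right (by positivity)

theorem abs_add_two_mul_mul_rpow_le {a b d η : ℝ} (hp : 0 ≤ p) (hd : |d| ≤ η) :
    |a + 2 * d * b| ^ p ≤ 2 ^ p * |a| ^ p + 4 ^ p * η ^ p * |b| ^ p := by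
  have hη : 0 ≤ η := (abs_nonneg d).trans hd
  have habs : |a + 2 * d * b| ≤ |a| + 2 * η * |b| := by
    calc |a + 2 * d * b| ≤ |a| + 2 * |d| * |b| := by
          simpa [abs_mul] using abs_add_le a (2 * d * b)
      _ ≤ |a| + 2 * η * |b| := by gcongr
  calc |a + 2 * d * b| ^ p ≤ (|a| + 2 * η * |b|) ^ p := by gcongr
    _ ≤ 2 ^ p * (|a| ^ p + (2 * η * |b|) ^ p) :=
        add_rpow_le_two_rpow_mul_add_rpow (abs_nonneg a) (by positivity) hp
    _ = 2 ^ p * |a| ^ p + 4 ^ p * η ^ p * |b| ^ p := by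
        rw [Real.mul_rpow (by positivity) (abs_nonneg b), Real.mul_rpow zero_le_two hη,
          show (4 : ℝ) = 2 * 2 by norm_num, Real.mul_rpow zero_le_two zero_le_two]
        ring

theorem ofReal_abs_add_two_mul_mul_rpow_le {a b d η : ℝ} (hp : 0 ≤ p) (hd : |d| ≤ η) :
    ENNReal.ofReal (|a + 2 * d * b| ^ p) ≤ ENNReal.ofReal (2 ^ p) * ENNReal.ofReal (|a| ^ p) +
      ENNReal.ofReal (4 ^ p) * (ENNReal.ofReal (η ^ p) * ENNReal.ofReal (|b| ^ p)) := by
  have hη : 0 ≤ η := (abs_nonneg d).trans hd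
  rw [← ENNReal.ofReal_mul (by positivity), ← ENNReal.ofReal_mul (by positivity),
    ← ENNReal.ofReal_mul (by positivity), ← ENNReal.ofReal_add (by positivity) (by positivity),
    ← mul_assoc]
  exact ENNReal.ofReal_le_ofReal (abs_add_two_mul_mul_rpow_le hp hd)

theorem one_add_two_rpow_le_four_rpow (hp : 1 ≤ p) : 1 + (2 : ℝ) ^ p ≤ 4 ^ p := by
  have h2 : (2 : ℝ) ≤ 2 ^ p := by
    simpa using Real.rpow_le_rpow_of_exponent_le one_le_two hp
  rw [show (4 : ℝ) = 2 * 2 by norm_num, Real.mul_rpow zero_le_two zero_le_two]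
  nlinarith

theorem add_ofReal_two_rpow_mul_add_le (hp : 1 ≤ p) (c I₁ I₂ : ℝ≥0∞) :
    I₁ + (ENNReal.ofReal (2 ^ p) * I₁ + ENNReal.ofReal (4 ^ p) * (c * I₂)) ≤
      ENNReal.ofReal (4 ^ p) * (I₁ + c * I₂) := by
  have h : 1 + ENNReal.ofReal (2 ^ p) ≤ ENNReal.ofReal (4 ^ p) := by
    rw [← ENNReal.ofReal_one, ← ENNReal.ofReal_add zero_le_one (by positivity)]
    exact ENNReal.ofReal_le_ofReal (one_add_two_rpow_le_four_rpow hp)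
  calc I₁ + (ENNReal.ofReal (2 ^ p) * I₁ + ENNReal.ofReal (4 ^ p) * (c * I₂))
      = (1 + ENNReal.ofReal (2 ^ p)) * I₁ + ENNReal.ofReal (4 ^ p) * (c * I₂) := by ring
    _ ≤ ENNReal.ofReal (4 ^ p) * (I₁ + c * I₂) := by
        rw [mul_add]
        gcongr

end Real

def underGraph {α : Type*} (s : Set α) (G : α → ℝ) : Set (α × ℝ) :=
  {x | x.1 ∈ s ∧ x.2 ∈ Ioo 0 (G x.1)}

def reflectGraph {α : Type*} (G : α → ℝ) (x : α × ℝ) : α × ℝ := (x.1, 2 * G x.1 - x.2)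

theorem isOpen_underGraph {α : Type*} [TopologicalSpace α] {s : Set α} {G : α → ℝ}
    (hs : IsOpen s) (hG : ContinuousOn G s) : IsOpen (underGraph s G) := by
  have hf : ContinuousOn (fun x : α × ℝ => (x.2, G x.1)) (s ×ˢ univ) :=
    continuous_snd.continuousOn.prodMk (hG.comp continuousOn_fst fun x hx => hx.1)
  have ht : IsOpen {q : ℝ × ℝ | 0 < q.1 ∧ q.1 < q.2} :=
    (isOpen_lt continuous_const continuous_fst).inter (isOpen_lt continuous_fst continuous_snd)
  convert hf.isOpen_inter_preimage (hs.prod isOpen_univ) ht using 1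
  ext x
  simp [underGraph]

theorem setLIntegral_Ico_comp_const_sub_le {c d : ℝ} (h : d ≤ 2 * c) (f : ℝ → ℝ≥0∞) :
    ∫⁻ b in Ico c d, f (2 * c - b) ≤ ∫⁻ t in Ioo 0 c, f t := by
  calc ∫⁻ b in Ico c d, f (2 * c - b) = ∫⁻ b in Ioo c d, f (2 * c - b) :=
        setLIntegral_congr Ioo_ae_eq_Ico.symm
    _ = ∫⁻ t in Ioo (2 * c - d) c, f t := by
        rw [(Measure.measurePreserving_sub_left volume (2 * c)).setLIntegral_comp_emb
          (MeasurableEquiv.subLeft (2 * c)).measurableEmbedding]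
        simp only [image_const_sub_Ioo]
        rw [show 2 * c - c = c by ring]
    _ ≤ ∫⁻ t in Ioo 0 c, f t := lintegral_mono_set (Ioo_subset_Ioo_left (by linarith))

section Reflection

variable {s : Set ℝ} {G : ℝ → ℝ} {G₁ : ℝ}

theorem setLIntegral_comp_reflectGraph_le (hs : IsOpen s) (hG : ContinuousOn G s)
    (hG₁ : ∀ a ∈ s, G₁ ≤ 2 * G a) {g : ℝ × ℝ → ℝ≥0∞} (hg : Measurable g) :
    ∫⁻ x in s ×ˢ Ioo 0 G₁ \ underGraph s G, g (reflectGraph G x) ≤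
      ∫⁻ x in underGraph s G, g x := by
  have hOG : MeasurableSet (underGraph s G) := (isOpen_underGraph hs hG).measurableSet
  have hU : MeasurableSet (s ×ˢ Ioo 0 G₁ \ underGraph s G) :=
    (hs.measurableSet.prod measurableSet_Ioo).diff hOG
  rw [← lintegral_indicator hU, ← lintegral_indicator hOG, Measure.volume_eq_prod,
    lintegral_prod _ (hg.indicator hOG).aemeasurable]
  refine (lintegral_prod_le _).trans (lintegral_mono fun a => ?_)
  by_cases ha : a ∈ s
  · calc ∫⁻ b, (s ×ˢ Ioo 0 G₁ \ underGraph s G).indicator (g ∘ reflectGraph G) (a, b)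
        ≤ ∫⁻ b, (Ico (G a) G₁).indicator (fun b => g (a, 2 * G a - b)) b := by
          refine lintegral_mono fun b => ?_
          by_cases hab : (a, b) ∈ s ×ˢ Ioo 0 G₁ \ underGraph s G
          · have hGb : G a ≤ b := not_lt.1 fun hlt => hab.2 ⟨ha, hab.1.2.1, hlt⟩
            rw [indicator_of_mem hab,
              indicator_of_mem (show b ∈ Ico (G a) G₁ from ⟨hGb, hab.1.2.2⟩)]
            rfl
          · rw [indicator_of_notMem hab]
            exact zero_le
      _ = ∫⁻ b in Ico (G a) G₁, g (a, 2 * G a - b) := lintegral_indicator measurableSet_Ico _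
      _ ≤ ∫⁻ t in Ioo 0 (G a), g (a, t) :=
          setLIntegral_Ico_comp_const_sub_le (hG₁ a ha) fun t => g (a, t)
      _ = ∫⁻ b, (underGraph s G).indicator g (a, b) := by
          rw [← lintegral_indicator measurableSet_Ioo]
          simp [indicator, underGraph, ha]
  · simp [indicator, ha]

theorem setLIntegral_le_of_le_comp_reflectGraph (hs : IsOpen s) (hG : ContinuousOn G s)
    (hG₁ : ∀ a ∈ s, G₁ ≤ 2 * G a) {f g h : ℝ × ℝ → ℝ≥0∞} (hh : Measurable h)
    (hf_under : ∀ x ∈ underGraph s G, f x = g x)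
    (hf_above : ∀ x : ℝ × ℝ, x.1 ∈ s → G x.1 ≤ x.2 → f x ≤ h (reflectGraph G x)) :
    ∫⁻ x in s ×ˢ Ioo 0 G₁, f x ≤
      (∫⁻ x in underGraph s G, g x) + ∫⁻ x in underGraph s G, h x := by
  set O := s ×ˢ Ioo 0 G₁
  have hOG : MeasurableSet (underGraph s G) := (isOpen_underGraph hs hG).measurableSet
  have hU : MeasurableSet (O \ underGraph s G) :=
    (hs.measurableSet.prod measurableSet_Ioo).diff hOG
  calc ∫⁻ x in O, f x ≤ ∫⁻ x in underGraph s G ∪ O \ underGraph s G, f x :=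
        lintegral_mono_set (by rw [union_sdiff_self]; exact subset_union_right)
    _ ≤ (∫⁻ x in underGraph s G, f x) + ∫⁻ x in O \ underGraph s G, f x :=
        lintegral_union_le _ _ _
    _ ≤ (∫⁻ x in underGraph s G, g x) + ∫⁻ x in O \ underGraph s G, h (reflectGraph G x) := by
        refine add_le_add (setLIntegral_congr_fun hOG hf_under).le (setLIntegral_mono' hU ?_)
        exact fun x hx => hf_above x hx.1.1 (not_lt.1 fun hlt => hx.2 ⟨hx.1.1, hx.1.2.1, hlt⟩)
    _ ≤ (∫⁻ x in underGraph s G, g x) + ∫⁻ x in underGraph s G, h x :=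
        add_le_add le_rfl (setLIntegral_comp_reflectGraph_le hs hG hG₁ hh)

end Reflection

theorem gradient_bound_reflection_extension_general
    (G₀ G₁ η₀ : ℝ) (hG₁2 : G₁ ≤ 2 * G₀)
    (G : ℝ → ℝ) (hG : ContDiffOn ℝ 1 G (Ioo (0:ℝ) 1))
    (hGlb : ∀ x ∈ Ioo (0:ℝ) 1, G₀ ≤ G x)
    (hG' : ∀ x ∈ Ioo (0:ℝ) 1, |deriv G x| ≤ η₀)
    (O : Set (ℝ × ℝ)) (hO : O = Ioo (0:ℝ) 1 ×ˢ Ioo (0:ℝ) G₁)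
    (OG : Set (ℝ × ℝ)) (hOG : OG = {x : ℝ × ℝ | x.1 ∈ Ioo (0:ℝ) 1 ∧ x.2 ∈ Ioo 0 (G x.1)})
    (φ : ℝ × ℝ → ℝ)
    (D1P D2P : ℝ × ℝ → ℝ)
    (hD1P : ∀ x : ℝ × ℝ, D1P x =
      if x.2 < G x.1 then pd1 φ x
      else pd1 φ (x.1, 2 * G x.1 - x.2) + 2 * deriv G x.1 * pd2 φ (x.1, 2 * G x.1 - x.2))
    (hD2P : ∀ x : ℝ × ℝ, D2P x =
      if x.2 < G x.1 then pd2 φ x else -(pd2 φ (x.1, 2 * G x.1 - x.2)))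
    (p : ℝ) (hp : 1 ≤ p) :
    (∫⁻ x in O, ENNReal.ofReal (|D2P x| ^ p) ≤ 2 * ∫⁻ x in OG, ENNReal.ofReal (|pd2 φ x| ^ p)) ∧
    (∫⁻ x in O, ENNReal.ofReal (|D1P x| ^ p) ≤ ENNReal.ofReal (4 ^ p) *
      ((∫⁻ x in OG, ENNReal.ofReal (|pd1 φ x| ^ p)) +
        ENNReal.ofReal (η₀ ^ p) * ∫⁻ x in OG, ENNReal.ofReal (|pd2 φ x| ^ p))) := by
  replace hOG : OG = underGraph (Ioo 0 1) G := hOG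
  subst hO hOG
  have hGc : ContinuousOn G (Ioo 0 1) := hG.continuousOn
  have hG₁ : ∀ a ∈ Ioo (0:ℝ) 1, G₁ ≤ 2 * G a := fun a ha => hG₁2.trans (by linarith [hGlb a ha])
  have hm₁ : Measurable fun x => ENNReal.ofReal (|pd1 φ x| ^ p) :=
    ((measurable_fderiv_apply_const ℝ φ (1, 0)).abs.pow_const p).ennreal_ofReal
  have hm₂ : Measurable fun x => ENNReal.ofReal (|pd2 φ x| ^ p) :=
    ((measurable_fderiv_apply_const ℝ φ (0, 1)).abs.pow_const p).ennreal_ofReal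
  constructor
  · refine (setLIntegral_le_of_le_comp_reflectGraph isOpen_Ioo hGc hG₁ hm₂
      (fun x hx => by rw [hD2P, if_pos hx.2.2]) fun x _ hx => ?_).trans_eq (two_mul _).symm
    rw [hD2P, if_neg (not_lt.2 hx), abs_neg]
    rfl
  · calc ∫⁻ x in Ioo 0 1 ×ˢ Ioo 0 G₁, ENNReal.ofReal (|D1P x| ^ p)
        ≤ (∫⁻ x in underGraph (Ioo 0 1) G, ENNReal.ofReal (|pd1 φ x| ^ p)) +
            ∫⁻ x in underGraph (Ioo 0 1) G, (ENNReal.ofReal (2 ^ p) *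
              ENNReal.ofReal (|pd1 φ x| ^ p) + ENNReal.ofReal (4 ^ p) *
                (ENNReal.ofReal (η₀ ^ p) * ENNReal.ofReal (|pd2 φ x| ^ p))) := by
          refine setLIntegral_le_of_le_comp_reflectGraph isOpen_Ioo hGc hG₁ (by fun_prop)
            (fun x hx => by rw [hD1P, if_pos hx.2.2]) fun x hx hGx => ?_
          rw [hD1P, if_neg (not_lt.2 hGx)]
          exact ofReal_abs_add_two_mul_mul_rpow_le (by linarith) (hG' _ hx)
      _ ≤ _ := by
          rw [lintegral_add_left (hm₁.const_mul _), lintegral_const_mul _ hm₁,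
            lintegral_const_mul _ (hm₂.const_mul _), lintegral_const_mul _ hm₂]
          exact add_ofReal_two_rpow_mul_add_le hp _ _ _

/-- **Gradient bound for the extension-by-reflection operator** (Lemma 2.1 of the paper):
for a `C¹` profile `G` with `0 < G₀ ≤ G ≤ G₁ ≤ 2G₀` and `|G'| ≤ η₀` on `(0,1)`, and `φ`
of class `C¹` on a neighborhood of the closure of `O^G`, the reflected extension `Pφ`
(whose partial derivatives on the reflected region are
`∂₁(Pφ)(x₁,x₂) = ∂₁φ(x₁,2G(x₁)−x₂) + 2G'(x₁)∂₂φ(x₁,2G(x₁)−x₂)` and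
`∂₂(Pφ)(x₁,x₂) = −∂₂φ(x₁,2G(x₁)−x₂)`) satisfies, for all `p ∈ [1,∞)`,
`∫_O |∂₂(Pφ)|^p ≤ 2 ∫_{O^G} |∂₂φ|^p` and
`∫_O |∂₁(Pφ)|^p ≤ 4^p (∫_{O^G} |∂₁φ|^p + η₀^p ∫_{O^G} |∂₂φ|^p)`. -/
theorem gradient_bound_reflection_extension
    (G₀ G₁ η₀ : ℝ) (hG₀pos : 0 < G₀) (hG₀₁ : G₀ ≤ G₁) (hG₁2 : G₁ ≤ 2 * G₀) (hη₀ : 0 < η₀)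
    (G : ℝ → ℝ) (hG : ContDiffOn ℝ 1 G (Ioo (0:ℝ) 1))
    (hGlb : ∀ x ∈ Ioo (0:ℝ) 1, G₀ ≤ G x) (hGub : ∀ x ∈ Ioo (0:ℝ) 1, G x ≤ G₁)
    (hG' : ∀ x ∈ Ioo (0:ℝ) 1, |deriv G x| ≤ η₀)
    (O : Set (ℝ × ℝ)) (hO : O = Ioo (0:ℝ) 1 ×ˢ Ioo (0:ℝ) G₁)
    (OG : Set (ℝ × ℝ)) (hOG : OG = {x : ℝ × ℝ | x.1 ∈ Ioo (0:ℝ) 1 ∧ x.2 ∈ Ioo 0 (G x.1)})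
    (φ : ℝ × ℝ → ℝ) (V : Set (ℝ × ℝ)) (hV : IsOpen V) (hVOG : closure OG ⊆ V)
    (hφ : ContDiffOn ℝ 1 φ V)
    (D1P D2P : ℝ × ℝ → ℝ)
    (hD1P : ∀ x : ℝ × ℝ, D1P x =
      if x.2 < G x.1 then pd1 φ x
      else pd1 φ (x.1, 2 * G x.1 - x.2) + 2 * deriv G x.1 * pd2 φ (x.1, 2 * G x.1 - x.2))
    (hD2P : ∀ x : ℝ × ℝ, D2P x =
      if x.2 < G x.1 then pd2 φ x else -(pd2 φ (x.1, 2 * G x.1 - x.2)))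
    (p : ℝ) (hp : 1 ≤ p) :
    (∫⁻ x in O, ENNReal.ofReal (|D2P x| ^ p) ≤ 2 * ∫⁻ x in OG, ENNReal.ofReal (|pd2 φ x| ^ p)) ∧
    (∫⁻ x in O, ENNReal.ofReal (|D1P x| ^ p) ≤ ENNReal.ofReal (4 ^ p) *
      ((∫⁻ x in OG, ENNReal.ofReal (|pd1 φ x| ^ p)) +
        ENNReal.ofReal (η₀ ^ p) * ∫⁻ x in OG, ENNReal.ofReal (|pd2 φ x| ^ p))) :=
  gradient_bound_reflection_extension_general G₀ G₁ η₀ hG₁2 G hG hGlb hG' O hO OG hOG φ D1P D2P hD1P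
    hD2P p hp
end

section
/- Let G₁ > 0 and let G : (0,1) → ℝ be measurable with 0 < G(x) ≤ G₁ for all x. Let Ω^G = {(x₁,x₂) ∈ ℝ² : x₁ ∈ (0,1), 0 < x₂ < G(x₁)}, and let u be a function on Ω^G such that for each x₁ the map x₂ ↦ u(x₁,x₂) is C¹ on (0, G(x₁)) with ∫_{Ω^G} (∂₂u)² dx < ∞. Then for every η > 0, ∫_{Ω^G} | u(x₁, x₂) − u(x₁, x₂/(1+η)) |² dx₁ dx₂ ≤ (η/(1+η)) G₁² ∫_{Ω^G} (∂₂u(x₁,x₂))² dx₁ dx₂. -/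
open MeasureTheory Set Filter Topology

/-- Partial derivative with respect to the second variable, taken fiberwise. -/
noncomputable def pd2fib (u : ℝ × ℝ → ℝ) (x : ℝ × ℝ) : ℝ := deriv (fun t => u (x.1, t)) x.2

/-! On the fiber over `x₁`, `u(x₁, t) - u(x₁, t/(1+η))` is the integral of `∂₂u` over an interval of
length `η t/(1+η) ≤ η G₁/(1+η)`, so by Cauchy–Schwarz its square is at most that length times the
integral of `(∂₂u)²` over the whole fiber. Integrating over the fiber, of length at most `G₁`, and
then over `x₁` (Tonelli on the region under the graph of `G`) gives the estimate. Tonelli needs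
`∂₂u` to be jointly measurable; it is, as a pointwise limit of difference quotients of `u`. -/

theorem sq_setIntegral_le_measureReal_mul_setIntegral_sq {α : Type*} [MeasurableSpace α]
    {μ : Measure α} {s : Set α} {f : α → ℝ} (hs : μ s ≠ ⊤) (hf : IntegrableOn f s μ)
    (hf2 : IntegrableOn (fun x => f x ^ 2) s μ) :
    (∫ x in s, f x ∂μ) ^ 2 ≤ μ.real s * ∫ x in s, f x ^ 2 ∂μ := by
  rcases eq_or_ne (μ s) 0 with hs0 | hs0
  · simp [Measure.restrict_eq_zero.mpr hs0]
  have hm : 0 < μ.real s := ENNReal.toReal_pos hs0 hs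
  have jensen := (even_two.convexOn_pow (𝕜 := ℝ)).map_set_average_le
    (continuous_pow 2).continuousOn isClosed_univ hs0 hs (ae_of_all _ fun _ => mem_univ _) hf hf2
  rw [setAverage_eq, setAverage_eq, smul_eq_mul, smul_eq_mul] at jensen
  calc (∫ x in s, f x ∂μ) ^ 2 = μ.real s ^ 2 * ((μ.real s)⁻¹ * ∫ x in s, f x ∂μ) ^ 2 := by
        field_simp
    _ ≤ μ.real s ^ 2 * ((μ.real s)⁻¹ * ∫ x in s, f x ^ 2 ∂μ) := by gcongr
    _ = μ.real s * ∫ x in s, f x ^ 2 ∂μ := by field_simp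

theorem sq_sub_le_mul_setIntegral_deriv_sq {v : ℝ → ℝ} {a b : ℝ} (hab : a ≤ b)
    (hv : ∀ x ∈ Icc a b, DifferentiableAt ℝ v x)
    (hsq : IntegrableOn (fun x => deriv v x ^ 2) (Icc a b)) :
    (v b - v a) ^ 2 ≤ (b - a) * ∫ x in Icc a b, deriv v x ^ 2 := by
  have hint : IntegrableOn (deriv v) (Icc a b) :=
    ((memLp_two_iff_integrable_sq (measurable_deriv v).aestronglyMeasurable).mpr hsq).integrable
      one_le_two
  have ftc : ∫ x in Icc a b, deriv v x = v b - v a := by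
    rw [integral_Icc_eq_integral_Ioc, ← intervalIntegral.integral_of_le hab]
    refine intervalIntegral.integral_eq_sub_of_hasDerivAt (fun x hx => (hv x ?_).hasDerivAt)
      (intervalIntegrable_iff_integrableOn_Icc_of_le hab |>.mpr hint)
    rwa [uIcc_of_le hab] at hx
  rw [← ftc, ← Real.volume_real_Icc_of_le hab]
  exact sq_setIntegral_le_measureReal_mul_setIntegral_sq (by simp) hint hsq

theorem setLIntegral_regionBetween {α : Type*} [MeasurableSpace α] {μ : Measure α} [SFinite μ]
    {f g : α → ℝ} {s : Set α} (hf : Measurable f) (hg : Measurable g) (hs : MeasurableSet s)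
    {F : α × ℝ → ENNReal} (hF : AEMeasurable F ((μ.prod volume).restrict (regionBetween f g s))) :
    ∫⁻ p in regionBetween f g s, F p ∂(μ.prod volume)
      = ∫⁻ x in s, (∫⁻ y in Ioo (f x) (g x), F (x, y)) ∂μ := by
  have hR := measurableSet_regionBetween hf hg hs
  rw [← lintegral_indicator hR, lintegral_prod _ ((aemeasurable_indicator_iff hR).mpr hF),
    ← lintegral_indicator hs]
  congr 1 with x
  by_cases hx : x ∈ s
  · rw [indicator_of_mem hx, ← lintegral_indicator measurableSet_Ioo]
    congr 1 with y
    simp [indicator, regionBetween, hx]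
  · simp [indicator, regionBetween, hx]

theorem aemeasurable_pd2fib {μ : Measure (ℝ × ℝ)} {u : ℝ × ℝ → ℝ} (hu : Measurable u)
    (hdiff : ∀ᵐ x ∂μ, DifferentiableAt ℝ (fun t => u (x.1, t)) x.2) :
    AEMeasurable (pd2fib u) μ := by
  refine aemeasurable_of_tendsto_metrizable_ae'
    (f := fun (n : ℕ) x => (n : ℝ) * (u (x.1, x.2 + (n : ℝ)⁻¹) - u (x.1, x.2)))
    (fun n => by fun_prop) ?_
  filter_upwards [hdiff] with x hx
  have := hx.hasDerivAt.tendsto_slope_zero_right.comp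
    (tendsto_inv_atTop_nhdsGT_zero.comp tendsto_natCast_atTop_atTop)
  simpa [Function.comp_def, pd2fib] using this

theorem setLIntegral_sq_sub_comp_div_le {v : ℝ → ℝ} {g η : ℝ} (hη : 0 < η)
    (hv : DifferentiableOn ℝ v (Ioo 0 g)) :
    ∫⁻ t in Ioo 0 g, ENNReal.ofReal ((v t - v (t / (1 + η))) ^ 2)
      ≤ ENNReal.ofReal (η / (1 + η) * g ^ 2) *
        ∫⁻ t in Ioo 0 g, ENNReal.ofReal (deriv v t ^ 2) := by
  rcases le_or_gt g 0 with hg | hg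
  · simp [Ioo_eq_empty_of_le hg]
  by_cases htop : ∫⁻ t in Ioo 0 g, ENNReal.ofReal (deriv v t ^ 2) = ⊤
  · rw [htop, ENNReal.mul_top (by positivity)]
    exact le_top
  have hsq : IntegrableOn (fun t => deriv v t ^ 2) (Ioo 0 g) :=
    ⟨((measurable_deriv v).pow_const 2).aestronglyMeasurable,
      (hasFiniteIntegral_iff_ofReal (ae_of_all _ fun _ => sq_nonneg _)).mpr
        (lt_top_iff_ne_top.mpr htop)⟩
  set B := ∫ t in Ioo 0 g, deriv v t ^ 2
  have hpt : ∀ t ∈ Ioo 0 g, (v t - v (t / (1 + η))) ^ 2 ≤ η / (1 + η) * g * B := by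
    rintro t ⟨ht0, htg⟩
    have hsub : Icc (t / (1 + η)) t ⊆ Ioo 0 g := Icc_subset_Ioo (by positivity) htg
    have hle : t / (1 + η) ≤ t := div_le_self ht0.le (by linarith)
    calc (v t - v (t / (1 + η))) ^ 2
        ≤ (t - t / (1 + η)) * ∫ x in Icc (t / (1 + η)) t, deriv v x ^ 2 :=
          sq_sub_le_mul_setIntegral_deriv_sq hle
            (fun x hx => hv.differentiableAt (isOpen_Ioo.mem_nhds (hsub hx))) (hsq.mono_set hsub)
      _ ≤ η / (1 + η) * g * B := by
          gcongr
          · rw [show t - t / (1 + η) = η / (1 + η) * t by field_simp; ring]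
            gcongr
          · exact setIntegral_mono_set hsq (ae_of_all _ fun _ => sq_nonneg _) hsub.eventuallyLE
  calc ∫⁻ t in Ioo 0 g, ENNReal.ofReal ((v t - v (t / (1 + η))) ^ 2)
      ≤ ∫⁻ t in Ioo 0 g, ENNReal.ofReal (η / (1 + η) * g * B) :=
        setLIntegral_mono measurable_const fun t ht => ENNReal.ofReal_le_ofReal (hpt t ht)
    _ = ENNReal.ofReal (η / (1 + η) * g ^ 2) * ENNReal.ofReal B := by
        rw [setLIntegral_const, Real.volume_Ioo, sub_zero, ← ENNReal.ofReal_mul (by positivity),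
          ← ENNReal.ofReal_mul (by positivity)]
        ring_nf
    _ = _ := by rw [ofReal_integral_eq_lintegral_ofReal hsq (ae_of_all _ fun _ => sq_nonneg _)]

theorem vertical_shift_L2_estimate_general
    (G₁ : ℝ)
    (G : ℝ → ℝ) (hGmeas : Measurable G)
    (hGpos : ∀ x ∈ Ioo (0:ℝ) 1, 0 < G x) (hGub : ∀ x ∈ Ioo (0:ℝ) 1, G x ≤ G₁)
    (ΩG : Set (ℝ × ℝ)) (hΩG : ΩG = {x : ℝ × ℝ | x.1 ∈ Ioo (0:ℝ) 1 ∧ x.2 ∈ Ioo 0 (G x.1)})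
    (u : ℝ × ℝ → ℝ) (humeas : Measurable u)
    (hufib : ∀ x₁ ∈ Ioo (0:ℝ) 1, ContDiffOn ℝ 1 (fun t => u (x₁, t)) (Ioo 0 (G x₁)))
    (η : ℝ) (hη : 0 < η) :
    ∫⁻ x in ΩG, ENNReal.ofReal ((u (x.1, x.2) - u (x.1, x.2 / (1 + η))) ^ 2)
      ≤ ENNReal.ofReal (η / (1 + η) * G₁ ^ 2) *
        ∫⁻ x in ΩG, ENNReal.ofReal ((pd2fib u x) ^ 2) := by
  obtain rfl : ΩG = regionBetween (fun _ => 0) G (Ioo 0 1) := hΩG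
  have hΩ : MeasurableSet (regionBetween (fun _ => 0) G (Ioo (0 : ℝ) 1)) :=
    measurableSet_regionBetween measurable_const hGmeas measurableSet_Ioo
  have hfib (x₁ : ℝ) (hx₁ : x₁ ∈ Ioo 0 1) :
      DifferentiableOn ℝ (fun t => u (x₁, t)) (Ioo 0 (G x₁)) :=
    (hufib x₁ hx₁).differentiableOn one_ne_zero
  have hpd := aemeasurable_pd2fib humeas <|
    ae_restrict_of_forall_mem (μ := volume.prod volume) hΩ fun x ⟨hx₁, hx₂⟩ => (hfib x.1 hx₁).differentiableAt (isOpen_Ioo.mem_nhds hx₂)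
  rw [Measure.volume_eq_prod, setLIntegral_regionBetween measurable_const hGmeas measurableSet_Ioo (by fun_prop),
    setLIntegral_regionBetween measurable_const hGmeas measurableSet_Ioo (by fun_prop),
    ← lintegral_const_mul' _ _ ENNReal.ofReal_ne_top]
  refine setLIntegral_mono' measurableSet_Ioo fun x₁ hx₁ => ?_
  calc _ ≤ ENNReal.ofReal (η / (1 + η) * G x₁ ^ 2) * _ :=
        setLIntegral_sq_sub_comp_div_le hη (hfib x₁ hx₁)
    _ ≤ _ := by
        gcongr ENNReal.ofReal (_ * ?_ ^ 2) * _
        exacts [(hGpos x₁ hx₁).le, hGub x₁ hx₁]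

/-- **Key estimate of Lemma 4.3 of the paper**:
`‖u − P_{1+η}u‖²_{L²(Ω^G)} ≤ (η/(1+η)) G₁² ‖∂₂u‖²_{L²(Ω^G)}`, where
`(P_{1+η}u)(x₁,x₂) = u(x₁, x₂/(1+η))` and
`Ω^G = {(x₁,x₂) : x₁ ∈ (0,1), 0 < x₂ < G(x₁)}` with `0 < G ≤ G₁`. -/
theorem vertical_shift_L2_estimate
    (G₁ : ℝ) (hG₁ : 0 < G₁)
    (G : ℝ → ℝ) (hGmeas : Measurable G)
    (hGpos : ∀ x ∈ Ioo (0:ℝ) 1, 0 < G x) (hGub : ∀ x ∈ Ioo (0:ℝ) 1, G x ≤ G₁)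
    (ΩG : Set (ℝ × ℝ)) (hΩG : ΩG = {x : ℝ × ℝ | x.1 ∈ Ioo (0:ℝ) 1 ∧ x.2 ∈ Ioo 0 (G x.1)})
    (u : ℝ × ℝ → ℝ) (humeas : Measurable u)
    (hufib : ∀ x₁ ∈ Ioo (0:ℝ) 1, ContDiffOn ℝ 1 (fun t => u (x₁, t)) (Ioo 0 (G x₁)))
    (hfin : ∫⁻ x in ΩG, ENNReal.ofReal ((pd2fib u x) ^ 2) < ⊤)
    (η : ℝ) (hη : 0 < η) :
    ∫⁻ x in ΩG, ENNReal.ofReal ((u (x.1, x.2) - u (x.1, x.2 / (1 + η))) ^ 2)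
      ≤ ENNReal.ofReal (η / (1 + η) * G₁ ^ 2) *
        ∫⁻ x in ΩG, ENNReal.ofReal ((pd2fib u x) ^ 2) :=
  vertical_shift_L2_estimate_general G₁ G hGmeas hGpos hGub ΩG hΩG u humeas hufib η hη
end

section
/- Let G₁ > 0, let G : (0,1) → ℝ be measurable with 0 < G(x) ≤ G₁ for all x, and let Ω^G = {(x₁,x₂) : x₁ ∈ (0,1), 0 < x₂ < G(x₁)}. Let u be a function on Ω^G such that for each x₁ the map x₂ ↦ u(x₁,x₂) is C¹ on (0, G(x₁)), with u, ∂₂u ∈ L²(Ω^G), let f ∈ L²(Ω^G) and η > 0. Then | ∫_{Ω^G} ( (1/(1+η)) u(x₁, x₂/(1+η)) − u(x₁,x₂) ) f(x₁,x₂) dx | ≤ (η/(1+η)) ‖f‖_{L²(Ω^G)} ‖u‖_{L²(Ω^G)} + (η^{1/2}/(1+η)^{3/2}) G₁ ‖f‖_{L²(Ω^G)} ‖∂₂u‖_{L²(Ω^G)}. -/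
open MeasureTheory Set Filter Topology
open scoped ENNReal

/-!
Write `a = 1 + η`. The integrand equals `a⁻¹ (u(x₁, x₂/a) - u) f - (η/a) u f`, so by
Cauchy–Schwarz it suffices to bound the `L²` norm of `u(x₁, x₂/a) - u(x₁, x₂)`. On each fibre,
the fundamental theorem of calculus and Cauchy–Schwarz on `[x₂/a, x₂]` give
`|u(x₁, x₂/a) - u(x₁, x₂)|² ≤ (1 - a⁻¹) x₂ ∫_{x₂/a}^{x₂} |∂₂u|² ≤ (1 - a⁻¹) G₁ ∫_0^{G(x₁)} |∂₂u|²`,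
and integrating over `Ω^G` gives `‖u(·, ·/a) - u‖² ≤ (η/(1+η)) G₁² ‖∂₂u‖²`. The fibrewise bounds
are integrated in `ℝ≥0∞`, where Tonelli needs no integrability.
-/

section Lp

variable {α : Type*} [MeasurableSpace α] {μ : Measure α}

theorem abs_integral_mul_le_sqrt_mul_sqrt {g h : α → ℝ} (hg : MemLp g 2 μ) (hh : MemLp h 2 μ) :
    |∫ a, g a * h a ∂μ| ≤ √(∫ a, g a ^ 2 ∂μ) * √(∫ a, h a ^ 2 ∂μ) := by
  have hpq : Real.HolderConjugate 2 2 := .two_two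
  have holder := integral_mul_norm_le_Lp_mul_Lq hpq (by simpa using hg) (by simpa using hh)
  simp only [Real.norm_eq_abs, ← abs_mul, Real.rpow_two, sq_abs, ← Real.sqrt_eq_rpow] at holder
  exact (abs_integral_le_integral_abs).trans holder

theorem memLp_two_and_integral_sq_le_of_lintegral_le {F D : α → ℝ} {C : ℝ} (hC : 0 ≤ C)
    (hF : AEStronglyMeasurable F μ) (hD : Integrable (fun x => D x ^ 2) μ)
    (hFD : ∫⁻ x, ENNReal.ofReal (F x ^ 2) ∂μ
      ≤ ENNReal.ofReal C * ∫⁻ x, ENNReal.ofReal (D x ^ 2) ∂μ) :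
    MemLp F 2 μ ∧ ∫ x, F x ^ 2 ∂μ ≤ C * ∫ x, D x ^ 2 ∂μ := by
  rw [← ofReal_integral_eq_lintegral_ofReal hD (ae_of_all _ fun _ => sq_nonneg _),
    ← ENNReal.ofReal_mul hC] at hFD
  have hF2 : Integrable (fun x => F x ^ 2) μ :=
    ⟨hF.pow 2, (hasFiniteIntegral_iff_ofReal (ae_of_all _ fun _ => sq_nonneg _)).2
      (hFD.trans_lt ENNReal.ofReal_lt_top)⟩
  refine ⟨(memLp_two_iff_integrable_sq hF).2 hF2, ?_⟩
  rw [integral_eq_lintegral_of_nonneg_ae (ae_of_all _ fun _ => sq_nonneg _) hF2.1]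
  exact ENNReal.toReal_le_of_le_ofReal (mul_nonneg hC (integral_nonneg fun _ => sq_nonneg _)) hFD

theorem abs_integral_inv_mul_sub_mul_le {u v f : α → ℝ} (hu : MemLp u 2 μ)
    (hvu : MemLp (fun x => v x - u x) 2 μ) (hf : MemLp f 2 μ) {η : ℝ} (hη : 0 ≤ η) :
    |∫ x, (1 / (1 + η) * v x - u x) * f x ∂μ|
      ≤ η / (1 + η) * √(∫ x, f x ^ 2 ∂μ) * √(∫ x, u x ^ 2 ∂μ)
        + 1 / (1 + η) * √(∫ x, f x ^ 2 ∂μ) * √(∫ x, (v x - u x) ^ 2 ∂μ) := by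
  have hsplit : ∀ x, (1 / (1 + η) * v x - u x) * f x
      = 1 / (1 + η) * ((v x - u x) * f x) - η / (1 + η) * (u x * f x) := fun x => by
    field_simp; ring
  have hvuf : Integrable (fun x => (v x - u x) * f x) μ := hvu.integrable_mul hf
  have huf : Integrable (fun x => u x * f x) μ := hu.integrable_mul hf
  rw [integral_congr_ae (ae_of_all _ hsplit), integral_sub (hvuf.const_mul _) (huf.const_mul _),
    integral_const_mul, integral_const_mul]
  calc _ ≤ |1 / (1 + η) * ∫ x, (v x - u x) * f x ∂μ| + |η / (1 + η) * ∫ x, u x * f x ∂μ| :=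
        abs_sub _ _
    _ = 1 / (1 + η) * |∫ x, (v x - u x) * f x ∂μ| + η / (1 + η) * |∫ x, u x * f x ∂μ| := by
        rw [abs_mul, abs_mul, abs_of_nonneg (a := 1 / (1 + η)) (by positivity),
          abs_of_nonneg (a := η / (1 + η)) (by positivity)]
    _ ≤ 1 / (1 + η) * (√(∫ x, (v x - u x) ^ 2 ∂μ) * √(∫ x, f x ^ 2 ∂μ))
          + η / (1 + η) * (√(∫ x, u x ^ 2 ∂μ) * √(∫ x, f x ^ 2 ∂μ)) := by
        gcongr
        exacts [abs_integral_mul_le_sqrt_mul_sqrt hvu hf, abs_integral_mul_le_sqrt_mul_sqrt hu hf]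
    _ = _ := by ring

end Lp

theorem sq_integral_le_mul_integral_sq {g : ℝ → ℝ} {b c : ℝ} (hbc : b ≤ c)
    (hg : MemLp g 2 (volume.restrict (Ioc b c))) :
    (∫ t in Ioc b c, g t) ^ 2 ≤ (c - b) * ∫ t in Ioc b c, g t ^ 2 := by
  have hcs := abs_integral_mul_le_sqrt_mul_sqrt hg (memLp_const (1 : ℝ))
  simp only [mul_one, one_pow, setIntegral_const, Real.volume_real_Ioc_of_le hbc,
    smul_eq_mul] at hcs
  calc (∫ t in Ioc b c, g t) ^ 2 ≤ (√(∫ t in Ioc b c, g t ^ 2) * √(c - b)) ^ 2 :=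
        sq_le_sq' (neg_le_of_abs_le hcs) (le_of_abs_le hcs)
    _ = (c - b) * ∫ t in Ioc b c, g t ^ 2 := by
        rw [mul_pow, Real.sq_sqrt (integral_nonneg fun _ => sq_nonneg _),
          Real.sq_sqrt (sub_nonneg.2 hbc), mul_comm]

theorem ofReal_sq_sub_le_mul_lintegral_sq_deriv {v : ℝ → ℝ} {U : Set ℝ} (hU : IsOpen U)
    (hv : ContDiffOn ℝ 1 v U) {b c : ℝ} (hbc : b ≤ c) (hbcU : Icc b c ⊆ U) :
    ENNReal.ofReal ((v c - v b) ^ 2)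
      ≤ ENNReal.ofReal (c - b) * ∫⁻ t in Ioc b c, ENNReal.ofReal (deriv v t ^ 2) := by
  have hcont : ContinuousOn (deriv v) (Icc b c) :=
    (hv.continuousOn_deriv_of_isOpen hU le_rfl).mono hbcU
  have hsq : IntegrableOn (fun t => deriv v t ^ 2) (Ioc b c) :=
    ((hcont.pow 2).integrableOn_Icc).mono_set Ioc_subset_Icc_self
  have hL2 : MemLp (deriv v) 2 (volume.restrict (Ioc b c)) :=
    (memLp_two_iff_integrable_sq (measurable_deriv v).aestronglyMeasurable).2 hsq
  have hftc : v c - v b = ∫ t in Ioc b c, deriv v t := by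
    rw [← intervalIntegral.integral_of_le hbc]
    refine (intervalIntegral.integral_deriv_eq_sub' v rfl (fun t ht => ?_) ?_).symm
    · rw [uIcc_of_le hbc] at ht
      exact (hv.differentiableOn one_ne_zero t (hbcU ht)).differentiableAt (hU.mem_nhds (hbcU ht))
    · rwa [uIcc_of_le hbc]
  rw [← ofReal_integral_eq_lintegral_ofReal hsq (ae_of_all _ fun _ => sq_nonneg _),
    ← ENNReal.ofReal_mul (sub_nonneg.2 hbc), hftc]
  exact ENNReal.ofReal_le_ofReal (sq_integral_le_mul_integral_sq hbc hL2)

theorem lintegral_sq_sub_comp_div_le {v : ℝ → ℝ} {L a : ℝ} (hv : ContDiffOn ℝ 1 v (Ioo 0 L))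
    (hL : 0 ≤ L) (ha : 1 ≤ a) :
    ∫⁻ x in Ioo 0 L, ENNReal.ofReal ((v (x / a) - v x) ^ 2)
      ≤ ENNReal.ofReal ((1 - a⁻¹) * L ^ 2) * ∫⁻ t in Ioo 0 L, ENNReal.ofReal (deriv v t ^ 2) := by
  set I := ∫⁻ t in Ioo 0 L, ENNReal.ofReal (deriv v t ^ 2)
  have ha₀ : 0 < a := one_pos.trans_le ha
  have ha' : 0 ≤ 1 - a⁻¹ := sub_nonneg.2 (inv_le_one_of_one_le₀ ha)
  have hpt : ∀ x ∈ Ioo 0 L,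
      ENNReal.ofReal ((v (x / a) - v x) ^ 2) ≤ ENNReal.ofReal ((1 - a⁻¹) * L) * I := by
    rintro x ⟨hx₀, hxL⟩
    have hxa : x / a ≤ x := div_le_self hx₀.le ha
    have hsub : Icc (x / a) x ⊆ Ioo 0 L :=
      fun t ht => ⟨(div_pos hx₀ ha₀).trans_le ht.1, ht.2.trans_lt hxL⟩
    calc ENNReal.ofReal ((v (x / a) - v x) ^ 2) = ENNReal.ofReal ((v x - v (x / a)) ^ 2) := by
          ring_nf
      _ ≤ ENNReal.ofReal (x - x / a) * ∫⁻ t in Ioc (x / a) x, ENNReal.ofReal (deriv v t ^ 2) :=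
          ofReal_sq_sub_le_mul_lintegral_sq_deriv isOpen_Ioo hv hxa hsub
      _ ≤ ENNReal.ofReal ((1 - a⁻¹) * L) * I := by
          gcongr ENNReal.ofReal ?_ * ?_
          · rw [div_eq_mul_inv, ← mul_one_sub, mul_comm]
            exact mul_le_mul_of_nonneg_left hxL.le ha'
          · exact lintegral_mono_set (Ioc_subset_Icc_self.trans hsub)
  calc ∫⁻ x in Ioo 0 L, ENNReal.ofReal ((v (x / a) - v x) ^ 2)
      ≤ ∫⁻ _ in Ioo 0 L, ENNReal.ofReal ((1 - a⁻¹) * L) * I :=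
        setLIntegral_mono' measurableSet_Ioo hpt
    _ = ENNReal.ofReal ((1 - a⁻¹) * L ^ 2) * I := by
      rw [setLIntegral_const, Real.volume_Ioo, sub_zero, mul_right_comm, ← ENNReal.ofReal_mul
        (mul_nonneg ha' hL), mul_assoc, ← sq]

section RegionBetween

variable {α : Type*} [MeasurableSpace α] {μ : Measure α}

theorem lintegral_lintegral_indicator_regionBetween {ν : Measure ℝ} {f g : α → ℝ} {s : Set α}
    (hs : MeasurableSet s) (h : α × ℝ → ℝ≥0∞) :
    ∫⁻ x, ∫⁻ y, (regionBetween f g s).indicator h (x, y) ∂ν ∂μ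
      = ∫⁻ x in s, ∫⁻ y in Ioo (f x) (g x), h (x, y) ∂ν ∂μ := by
  rw [← lintegral_indicator hs]
  congr 1 with x
  by_cases hx : x ∈ s
  · rw [indicator_of_mem hx, ← lintegral_indicator measurableSet_Ioo]
    congr 1 with y
    by_cases hy : y ∈ Ioo (f x) (g x)
    · rw [indicator_of_mem hy, indicator_of_mem (show (x, y) ∈ regionBetween f g s from ⟨hx, hy⟩)]
    · rw [indicator_of_notMem hy, indicator_of_notMem fun hxy => hy hxy.2]
  · simp [regionBetween, hx]

theorem memLp_and_integral_sq_sub_comp_div_le [SFinite μ] {s : Set α} (hs : MeasurableSet s)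
    {G : α → ℝ} (hG : Measurable G) {L : ℝ} (hG₀ : ∀ x ∈ s, 0 ≤ G x) (hGL : ∀ x ∈ s, G x ≤ L)
    {u : α × ℝ → ℝ} (hu : Measurable u)
    (hfib : ∀ x ∈ s, ContDiffOn ℝ 1 (fun t => u (x, t)) (Ioo 0 (G x)))
    (hD : Integrable (fun p => deriv (fun t => u (p.1, t)) p.2 ^ 2)
      ((μ.prod volume).restrict (regionBetween 0 G s)))
    {a : ℝ} (ha : 1 ≤ a) :
    MemLp (fun p => u (p.1, p.2 / a) - u p) 2 ((μ.prod volume).restrict (regionBetween 0 G s)) ∧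
      ∫ p in regionBetween 0 G s, (u (p.1, p.2 / a) - u p) ^ 2 ∂μ.prod volume
        ≤ (1 - a⁻¹) * L ^ 2 *
          ∫ p in regionBetween 0 G s, deriv (fun t => u (p.1, t)) p.2 ^ 2 ∂μ.prod volume := by
  set R := regionBetween 0 G s
  have hR : MeasurableSet R := measurableSet_regionBetween measurable_const hG hs
  have ha' : 0 ≤ 1 - a⁻¹ := sub_nonneg.2 (inv_le_one_of_one_le₀ ha)
  have hC : 0 ≤ (1 - a⁻¹) * L ^ 2 := mul_nonneg ha' (sq_nonneg L)
  have hPu : Measurable fun p : α × ℝ => u (p.1, p.2 / a) :=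
    hu.comp (measurable_fst.prodMk (measurable_snd.div_const a))
  refine memLp_two_and_integral_sq_le_of_lintegral_le hC (hPu.sub hu).aestronglyMeasurable hD ?_
  -- `lintegral_prod_le` needs no measurability; only the reverse inequality for `∂₂u` does.
  have hDmeas : AEMeasurable
      (R.indicator fun p => ENNReal.ofReal (deriv (fun t => u (p.1, t)) p.2 ^ 2)) (μ.prod volume) :=
    (aemeasurable_indicator_iff hR).2 hD.1.aemeasurable.ennreal_ofReal
  calc ∫⁻ p in R, ENNReal.ofReal ((u (p.1, p.2 / a) - u p) ^ 2) ∂μ.prod volume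
      ≤ ∫⁻ x, ∫⁻ y, R.indicator (fun p => ENNReal.ofReal ((u (p.1, p.2 / a) - u p) ^ 2)) (x, y)
          ∂volume ∂μ := by
        rw [← lintegral_indicator hR]
        exact lintegral_prod_le _
    _ = ∫⁻ x in s, ∫⁻ y in Ioo 0 (G x), ENNReal.ofReal ((u (x, y / a) - u (x, y)) ^ 2) ∂volume ∂μ :=
        lintegral_lintegral_indicator_regionBetween hs _
    _ ≤ ∫⁻ x in s, ENNReal.ofReal ((1 - a⁻¹) * L ^ 2) *
          ∫⁻ y in Ioo 0 (G x), ENNReal.ofReal (deriv (fun t => u (x, t)) y ^ 2) ∂volume ∂μ := by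
        refine setLIntegral_mono' hs fun x hx =>
          (lintegral_sq_sub_comp_div_le (hfib x hx) (hG₀ x hx) ha).trans ?_
        gcongr
        exacts [hG₀ x hx, hGL x hx]
    _ = ENNReal.ofReal ((1 - a⁻¹) * L ^ 2) *
          ∫⁻ p in R, ENNReal.ofReal (deriv (fun t => u (p.1, t)) p.2 ^ 2) ∂μ.prod volume := by
        rw [lintegral_const_mul' _ _ ENNReal.ofReal_ne_top, ← lintegral_indicator hR,
          lintegral_prod _ hDmeas, lintegral_lintegral_indicator_regionBetween hs]
        rfl

end RegionBetween

/-- **The estimate (4.10)/(EQINT) from the proof of Lemma 4.3 of the paper**: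
`|∫_{Ω^G} ((1/(1+η)) P_{1+η}u − u) f| ≤ (η/(1+η))‖f‖_{L²}‖u‖_{L²}
  + (η^{1/2}/(1+η)^{3/2}) G₁ ‖f‖_{L²}‖∂₂u‖_{L²}`,
where `(P_{1+η}u)(x₁,x₂) = u(x₁, x₂/(1+η))` and
`Ω^G = {(x₁,x₂) : x₁ ∈ (0,1), 0 < x₂ < G(x₁)}` with `0 < G ≤ G₁`. -/
theorem shifted_integral_estimate
    (G₁ : ℝ) (hG₁ : 0 < G₁)
    (G : ℝ → ℝ) (hGmeas : Measurable G)
    (hGpos : ∀ x ∈ Ioo (0:ℝ) 1, 0 < G x) (hGub : ∀ x ∈ Ioo (0:ℝ) 1, G x ≤ G₁)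
    (ΩG : Set (ℝ × ℝ)) (hΩG : ΩG = {x : ℝ × ℝ | x.1 ∈ Ioo (0:ℝ) 1 ∧ x.2 ∈ Ioo 0 (G x.1)})
    (u : ℝ × ℝ → ℝ) (humeas : Measurable u)
    (hufib : ∀ x₁ ∈ Ioo (0:ℝ) 1, ContDiffOn ℝ 1 (fun t => u (x₁, t)) (Ioo 0 (G x₁)))
    (huL2 : IntegrableOn (fun x => (u x) ^ 2) ΩG)
    (hd2L2 : IntegrableOn (fun x => (pd2fib u x) ^ 2) ΩG)
    (f : ℝ × ℝ → ℝ) (hfmeas : Measurable f)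
    (hfL2 : IntegrableOn (fun x => (f x) ^ 2) ΩG)
    (η : ℝ) (hη : 0 < η) :
    |∫ x in ΩG, ((1 / (1 + η)) * u (x.1, x.2 / (1 + η)) - u x) * f x|
      ≤ (η / (1 + η)) * Real.sqrt (∫ x in ΩG, (f x) ^ 2) * Real.sqrt (∫ x in ΩG, (u x) ^ 2)
        + (Real.sqrt η / (1 + η) ^ ((3:ℝ) / 2)) * G₁ *
          Real.sqrt (∫ x in ΩG, (f x) ^ 2) * Real.sqrt (∫ x in ΩG, (pd2fib u x) ^ 2) := by
  have hΩ : regionBetween 0 G (Ioo 0 1) = ΩG := hΩG.symm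
  have hPu := memLp_and_integral_sq_sub_comp_div_le (μ := volume) measurableSet_Ioo hGmeas
    (fun x hx => (hGpos x hx).le) hGub humeas hufib (hΩ ▸ hd2L2) (a := 1 + η) (by linarith)
  rw [hΩ] at hPu
  have hsqrt : √(∫ x in ΩG, (u (x.1, x.2 / (1 + η)) - u x) ^ 2)
      ≤ √(η / (1 + η)) * G₁ * √(∫ x in ΩG, pd2fib u x ^ 2) := by
    have hη' : 1 - (1 + η)⁻¹ = η / (1 + η) := by field_simp; ring
    rw [← Real.sqrt_sq hG₁.le, ← Real.sqrt_mul (by positivity), ← Real.sqrt_mul (by positivity),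
      ← hη']
    exact Real.sqrt_le_sqrt hPu.2
  have hcoef : 1 / (1 + η) * √(η / (1 + η)) = √η / (1 + η) ^ ((3:ℝ) / 2) := by
    rw [Real.sqrt_div hη.le, show (3:ℝ) / 2 = 1 + 1 / 2 by norm_num,
      Real.rpow_add (by linarith), Real.rpow_one, ← Real.sqrt_eq_rpow]
    field_simp
  set Nf := √(∫ x in ΩG, f x ^ 2)
  calc _ ≤ η / (1 + η) * Nf * √(∫ x in ΩG, u x ^ 2)
        + 1 / (1 + η) * Nf * √(∫ x in ΩG, (u (x.1, x.2 / (1 + η)) - u x) ^ 2) :=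
        abs_integral_inv_mul_sub_mul_le
          ((memLp_two_iff_integrable_sq humeas.aestronglyMeasurable).2 huL2) hPu.1
          ((memLp_two_iff_integrable_sq hfmeas.aestronglyMeasurable).2 hfL2) hη.le
    _ ≤ η / (1 + η) * Nf * √(∫ x in ΩG, u x ^ 2)
        + 1 / (1 + η) * Nf * (√(η / (1 + η)) * G₁ * √(∫ x in ΩG, pd2fib u x ^ 2)) := by
        gcongr
    _ = _ := by rw [← hcoef]; ring
end

section
/- Let L > 0, 0 < G₀ ≤ G₁, M > 0, and let A(M) be the set of C¹, L-periodic functions G : ℝ → ℝ with G₀ ≤ G ≤ G₁ and |G'| ≤ M. There exists a constant C > 0, depending only on G₀, G₁ and M, with the following property. For all G, Ĝ ∈ A(M), set F̂ = Ĝ/G and Y*(G) = {(z₁,z₂) : 0 < z₁ < L, 0 < z₂ < G(z₁)}, and for a C¹ function U on Y*(G) define the vector field B_F̂U(z₁,z₂) = ( F̂(z₁) ∂₁U − F̂'(z₁) z₂ ∂₂U , −F̂'(z₁) z₂ ∂₁U + (1/F̂(z₁)) (1 + (z₂ F̂'(z₁))²) ∂₂U ). Then for all C¹ functions U, V on Y*(G)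 with U, V, ∇U, ∇V ∈ L²(Y*(G)): | ∫_{Y*(G)} B_F̂U · ∇(V/F̂) dz − ∫_{Y*(G)} ∇U · ∇V dz | ≤ C ( sup|G − Ĝ| + sup|G' − Ĝ'| ) ‖U‖_H ‖V‖_H, where V/F̂ denotes the function (z₁,z₂) ↦ V(z₁,z₂)/F̂(z₁) and ‖W‖_H² = ∫_{Y*(G)} ( W² + |∇W|² ) dz. -/
open MeasureTheory Set Filter Topology

/-- The basic cell `Y*(G) = {(z₁,z₂) : 0 < z₁ < L, 0 < z₂ < G(z₁)}`. -/
def Ystar (L : ℝ) (G : ℝ → ℝ) : Set (ℝ × ℝ) :=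
  {z : ℝ × ℝ | z.1 ∈ Ioo 0 L ∧ z.2 ∈ Ioo 0 (G z.1)}

/-- The `H¹(Y*(G))` norm `‖W‖_H = (∫_{Y*(G)} (W² + |∇W|²))^{1/2}`. -/
noncomputable def Hnorm (L : ℝ) (G : ℝ → ℝ) (W : ℝ × ℝ → ℝ) : ℝ :=
  Real.sqrt (∫ z in Ystar L G, ((W z) ^ 2 + (pd1 W z) ^ 2 + (pd2 W z) ^ 2))


/-! Write `a = F̂(z₁)`, `r = F̂'(z₁)/F̂(z₁)` and `t = z₂`. Expanding `∇(V/F̂)` shows that the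
transported integrand `B_F̂U · ∇(V/F̂)` differs from `∇U · ∇V` by the sum of the products
`U_{,i} V_{,j}` weighted by the coefficients `r`, `r t`, `r² t` and `a⁻² - 1 + (t r)²`. Since
`r = Ĝ'/Ĝ - G'/G` and `a⁻² - 1 = (G² - Ĝ²)/Ĝ²`, each coefficient is `O(|G - Ĝ| + |G' - Ĝ'|)`
uniformly on the cell, and the Cauchy–Schwarz inequality turns the pointwise bound into the
bound by the `H¹` norms. -/

theorem integral_mul_le_sqrt_mul_sqrt {α : Type*} [MeasurableSpace α] {μ : Measure α}
    {f g : α → ℝ} (hf₀ : 0 ≤ᵐ[μ] f) (hg₀ : 0 ≤ᵐ[μ] g) (hf : MemLp f 2 μ) (hg : MemLp g 2 μ) :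
    ∫ x, f x * g x ∂μ ≤ √(∫ x, f x ^ 2 ∂μ) * √(∫ x, g x ^ 2 ∂μ) := by
  have := integral_mul_le_Lp_mul_Lq_of_nonneg Real.HolderConjugate.two_two hf₀ hg₀
    (by simpa using hf) (by simpa using hg)
  simpa [Real.sqrt_eq_rpow] using this

theorem abs_integral_sub_le_of_abs_sub_le {α : Type*} [MeasurableSpace α] {μ : Measure α}
    {f g h : α → ℝ} (hf : AEStronglyMeasurable f μ) (hg : Integrable g μ) (hh : Integrable h μ)
    (hfg : ∀ᵐ x ∂μ, |f x - g x| ≤ h x) :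
    |∫ x, f x ∂μ - ∫ x, g x ∂μ| ≤ ∫ x, h x ∂μ := by
  have hfg_int : Integrable (f - g) μ := hh.mono' (hf.sub hg.1) hfg
  rw [← integral_sub (by simpa using hfg_int.add hg) hg]
  exact norm_integral_le_of_norm_le (f := fun x => f x - g x) hh
    (by simpa only [Real.norm_eq_abs] using hfg)

theorem abs_sub_le_iSup_abs_sub {α : Type*} {f g : α → ℝ} {a b : ℝ} (hf : ∀ x, f x ∈ Icc a b)
    (hg : ∀ x, g x ∈ Icc a b) (x : α) : |f x - g x| ≤ ⨆ y, |f y - g y| :=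
  le_ciSup (f := fun y => |f y - g y|) ⟨b - a, by
    rintro _ ⟨y, rfl⟩
    exact abs_sub_le_iff.2 ⟨by linarith [(hf y).2, (hg y).1], by linarith [(hg y).2, (hf y).1]⟩⟩ x

theorem hasFDerivAt_div_comp_fst {V : ℝ × ℝ → ℝ} {V' : ℝ × ℝ →L[ℝ] ℝ} {F : ℝ → ℝ} {F' : ℝ}
    {z : ℝ × ℝ} (hV : HasFDerivAt V V' z) (hF : HasDerivAt F F' z.1) (hF₀ : F z.1 ≠ 0) :
    HasFDerivAt (fun w => V w / F w.1)
      ((F z.1)⁻¹ • V' - (V z * F' / F z.1 ^ 2) • ContinuousLinearMap.fst ℝ ℝ ℝ) z := by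
  have hinv : HasFDerivAt (fun w : ℝ × ℝ => (F w.1)⁻¹)
      ((-F' / F z.1 ^ 2) • ContinuousLinearMap.fst ℝ ℝ ℝ) z :=
    (hF.inv hF₀).comp_hasFDerivAt z hasFDerivAt_fst
  simp_rw [div_eq_mul_inv]
  refine (hV.mul hinv).congr_fderiv (ContinuousLinearMap.ext fun w => ?_)
  simp
  ring

theorem pd1_div_comp_fst {V : ℝ × ℝ → ℝ} {F : ℝ → ℝ} {z : ℝ × ℝ}
    (hV : DifferentiableAt ℝ V z) (hF : DifferentiableAt ℝ F z.1) (hF₀ : F z.1 ≠ 0) :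
    pd1 (fun w => V w / F w.1) z = (pd1 V z - V z * logDeriv F z.1) / F z.1 := by
  rw [pd1, (hasFDerivAt_div_comp_fst hV.hasFDerivAt hF.hasDerivAt hF₀).fderiv, pd1,
    logDeriv_apply]
  simp
  field_simp

theorem pd2_div_comp_fst {V : ℝ × ℝ → ℝ} {F : ℝ → ℝ} {z : ℝ × ℝ}
    (hV : DifferentiableAt ℝ V z) (hF : DifferentiableAt ℝ F z.1) (hF₀ : F z.1 ≠ 0) :
    pd2 (fun w => V w / F w.1) z = pd2 V z / F z.1 := by
  rw [pd2, (hasFDerivAt_div_comp_fst hV.hasFDerivAt hF.hasDerivAt hF₀).fderiv, pd2]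
  simp [div_eq_inv_mul]

@[fun_prop]
theorem measurable_pd1 (W : ℝ × ℝ → ℝ) : Measurable (pd1 W) :=
  measurable_fderiv_apply_const ℝ W _

@[fun_prop]
theorem measurable_pd2 (W : ℝ × ℝ → ℝ) : Measurable (pd2 W) :=
  measurable_fderiv_apply_const ℝ W _

theorem isOpen_Ystar (L : ℝ) {G : ℝ → ℝ} (hG : Continuous G) : IsOpen (Ystar L G) := by
  simp only [Ystar, mem_Ioo, ofPred_and]
  exact ((isOpen_lt continuous_const continuous_fst).inter
    (isOpen_lt continuous_fst continuous_const)).inter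
    ((isOpen_lt continuous_const continuous_snd).inter
    (isOpen_lt continuous_snd (hG.comp continuous_fst)))

/-- The integrand of `ρ_F̂(U, V)`, i.e. `B_F̂U · ∇(V/F̂)`. -/
noncomputable def transportedIntegrand (F : ℝ → ℝ) (U V : ℝ × ℝ → ℝ) (z : ℝ × ℝ) : ℝ :=
  (F z.1 * pd1 U z - deriv F z.1 * z.2 * pd2 U z) * pd1 (fun w => V w / F w.1) z
    + (-(deriv F z.1 * z.2 * pd1 U z) + (1 / F z.1) * (1 + (z.2 * deriv F z.1) ^ 2) * pd2 U z)
      * pd2 (fun w => V w / F w.1) z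

noncomputable def gradDot (U V : ℝ × ℝ → ℝ) (z : ℝ × ℝ) : ℝ :=
  pd1 U z * pd1 V z + pd2 U z * pd2 V z

noncomputable def jetNorm (W : ℝ × ℝ → ℝ) (z : ℝ × ℝ) : ℝ := |W z| + |pd1 W z| + |pd2 W z|

theorem jetNorm_nonneg (W : ℝ × ℝ → ℝ) (z : ℝ × ℝ) : 0 ≤ jetNorm W z := by
  unfold jetNorm; positivity

/-- The total weight of the error terms at a point with `a = F̂(z₁)`, `r = F̂'(z₁)/F̂(z₁)`,
`t = z₂`. -/
noncomputable def transportCoeff (a r t : ℝ) : ℝ :=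
  |r| * (1 + |t| + |r| * |t|) + |a⁻¹ ^ 2 - 1 + (t * r) ^ 2|

/-- `(v₁ - v₀ b / a) / a` and `v₂ / a` are the partial derivatives of `V / F̂`, with `a = F̂(z₁)`
and `b = F̂'(z₁)`. -/
theorem abs_transported_sub_le (a b t u₀ u₁ u₂ v₀ v₁ v₂ : ℝ) (ha : a ≠ 0) :
    |(a * u₁ - b * t * u₂) * ((v₁ - v₀ * (b / a)) / a)
        + (-(b * t * u₁) + 1 / a * (1 + (t * b) ^ 2) * u₂) * (v₂ / a)
        - (u₁ * v₁ + u₂ * v₂)|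
      ≤ transportCoeff a (b / a) t * ((|u₀| + |u₁| + |u₂|) * (|v₀| + |v₁| + |v₂|)) := by
  set r := b / a
  set c := a⁻¹ ^ 2 - 1 + (t * r) ^ 2 with hc
  have hb : b = r * a := by simp [r, ha]
  have key : (a * u₁ - b * t * u₂) * ((v₁ - v₀ * r) / a)
        + (-(b * t * u₁) + 1 / a * (1 + (t * b) ^ 2) * u₂) * (v₂ / a) - (u₁ * v₁ + u₂ * v₂)
      = -r * (u₁ * v₀) - r * t * (u₂ * v₁ + u₁ * v₂) + r ^ 2 * t * (u₂ * v₀)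
        + c * (u₂ * v₂) := by
    rw [hb, hc]
    field_simp
    ring
  rw [key, transportCoeff]
  have h₁ := abs_nonneg u₀; have h₂ := abs_nonneg u₁; have h₃ := abs_nonneg u₂
  have k₁ := abs_nonneg v₀; have k₂ := abs_nonneg v₁; have k₃ := abs_nonneg v₂
  have hr := abs_nonneg r; have ht := abs_nonneg t
  have hmid : |u₂ * v₁ + u₁ * v₂| ≤ |u₂| * |v₁| + |u₁| * |v₂| :=
    (abs_add_le _ _).trans_eq (by rw [abs_mul, abs_mul])
  calc |-r * (u₁ * v₀) - r * t * (u₂ * v₁ + u₁ * v₂) + r ^ 2 * t * (u₂ * v₀) + c * (u₂ * v₂)|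
      ≤ |r| * (|u₁| * |v₀|) + |r| * |t| * |u₂ * v₁ + u₁ * v₂| + |r| ^ 2 * |t| * (|u₂| * |v₀|)
          + |c| * (|u₂| * |v₂|) := by
        have e₁ := abs_add_le (-r * (u₁ * v₀) - r * t * (u₂ * v₁ + u₁ * v₂)
          + r ^ 2 * t * (u₂ * v₀)) (c * (u₂ * v₂))
        have e₂ := abs_add_le (-r * (u₁ * v₀) - r * t * (u₂ * v₁ + u₁ * v₂)) (r ^ 2 * t * (u₂ * v₀))
        have e₃ := abs_sub (-r * (u₁ * v₀)) (r * t * (u₂ * v₁ + u₁ * v₂))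
        simp only [abs_mul, abs_neg, abs_pow] at e₁ e₂ e₃ ⊢
        linarith
    _ ≤ (|r| * (1 + |t| + |r| * |t|) + |c|)
        * ((|u₀| + |u₁| + |u₂|) * (|v₀| + |v₁| + |v₂|)) := by
        have := mul_le_mul_of_nonneg_left hmid (mul_nonneg hr ht)
        nlinarith [mul_nonneg (mul_nonneg hr ht) hr, mul_nonneg hr ht, abs_nonneg c,
          mul_nonneg h₁ k₁, mul_nonneg h₁ k₂, mul_nonneg h₁ k₃, mul_nonneg h₂ k₁,
          mul_nonneg h₂ k₂, mul_nonneg h₂ k₃, mul_nonneg h₃ k₁, mul_nonneg h₃ k₂, mul_nonneg h₃ k₃]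

theorem abs_transportedIntegrand_sub_gradDot_le {F : ℝ → ℝ} {U V : ℝ × ℝ → ℝ} {z : ℝ × ℝ}
    (hV : DifferentiableAt ℝ V z) (hF : DifferentiableAt ℝ F z.1) (hF₀ : F z.1 ≠ 0) :
    |transportedIntegrand F U V z - gradDot U V z|
      ≤ transportCoeff (F z.1) (logDeriv F z.1) z.2 * (jetNorm U z * jetNorm V z) := by
  rw [transportedIntegrand, gradDot, pd1_div_comp_fst hV hF hF₀, pd2_div_comp_fst hV hF hF₀,
    logDeriv_apply]
  exact abs_transported_sub_le _ _ _ _ _ _ _ _ _ hF₀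

noncomputable def transportConst (G₀ G₁ M : ℝ) : ℝ :=
  (G₁ + M) / G₀ ^ 2 * (1 + G₁) * (1 + 2 * M / G₀ * G₁) + 2 * G₁ / G₀ ^ 2

theorem transportConst_pos {G₀ G₁ M : ℝ} (hG₀ : 0 < G₀) (hG₁ : 0 < G₁) (hM : 0 ≤ M) :
    0 < transportConst G₀ G₁ M := by
  unfold transportConst
  positivity

theorem transportCoeff_le {a r t κ ρ γ T ε : ℝ} (hr : |r| ≤ κ * ε) (hrρ : |r| ≤ ρ)
    (ht : |t| ≤ T) (ha : |a⁻¹ ^ 2 - 1| ≤ γ * ε) :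
    transportCoeff a r t ≤ (κ * (1 + T) * (1 + ρ * T) + γ) * ε := by
  have hκε : 0 ≤ κ * ε := (abs_nonneg r).trans hr
  have hρ : 0 ≤ ρ := (abs_nonneg r).trans hrρ
  have hT : 0 ≤ T := (abs_nonneg t).trans ht
  have hrt : |r| * |t| ≤ ρ * T := mul_le_mul hrρ ht (abs_nonneg t) hρ
  have hsq : (t * r) ^ 2 = |r| * |t| * (|r| * |t|) := by
    rw [← abs_mul, ← sq, sq_abs]; ring
  have hsq_le : |r| * |t| * (|r| * |t|) ≤ κ * ε * T * (ρ * T) :=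
    mul_le_mul (mul_le_mul hr ht (abs_nonneg t) hκε) hrt (by positivity) (mul_nonneg hκε hT)
  calc transportCoeff a r t
      ≤ |r| * (1 + |t| + |r| * |t|) + (|a⁻¹ ^ 2 - 1| + |r| * |t| * (|r| * |t|)) := by
        rw [transportCoeff]
        gcongr
        rw [← hsq]
        exact (abs_add_le _ _).trans_eq (by rw [abs_of_nonneg (sq_nonneg (t * r))])
    _ ≤ κ * ε * (1 + T + ρ * T) + (γ * ε + κ * ε * T * (ρ * T)) := by
        gcongr
    _ = (κ * (1 + T) * (1 + ρ * T) + γ) * ε := by ring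

section Profiles

variable {G₀ G₁ M g ĝ g' ĝ' : ℝ}

theorem abs_div_sub_div_le_mul (hG₀ : 0 < G₀) (hg : G₀ ≤ g) (hg₁ : g ≤ G₁) (hĝ : G₀ ≤ ĝ)
    (hg' : |g'| ≤ M) :
    |ĝ' / ĝ - g' / g| ≤ (G₁ + M) / G₀ ^ 2 * (|g - ĝ| + |g' - ĝ'|) := by
  have hgpos : 0 < g := hG₀.trans_le hg
  have hĝpos : 0 < ĝ := hG₀.trans_le hĝ
  have hnum : |(ĝ' - g') * g + g' * (g - ĝ)| ≤ (G₁ + M) * (|g - ĝ| + |g' - ĝ'|) := by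
    have h₁ : |ĝ' - g'| * g ≤ |g' - ĝ'| * G₁ := by
      rw [abs_sub_comm]; exact mul_le_mul_of_nonneg_left hg₁ (abs_nonneg _)
    have h₂ : |g'| * |g - ĝ| ≤ M * |g - ĝ| := mul_le_mul_of_nonneg_right hg' (abs_nonneg _)
    calc |(ĝ' - g') * g + g' * (g - ĝ)| ≤ |ĝ' - g'| * g + |g'| * |g - ĝ| := by
          simpa [abs_mul, abs_of_pos hgpos] using abs_add_le ((ĝ' - g') * g) (g' * (g - ĝ))
      _ ≤ (G₁ + M) * (|g - ĝ| + |g' - ĝ'|) := by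
          nlinarith [abs_nonneg (g - ĝ), abs_nonneg (g' - ĝ'), abs_nonneg g', hG₀.le.trans hg]
  calc |ĝ' / ĝ - g' / g| = |(ĝ' - g') * g + g' * (g - ĝ)| / (ĝ * g) := by
        rw [div_sub_div _ _ hĝpos.ne' hgpos.ne', abs_div, abs_of_pos (mul_pos hĝpos hgpos)]
        ring_nf
    _ ≤ (G₁ + M) * (|g - ĝ| + |g' - ĝ'|) / G₀ ^ 2 := by
        refine div_le_div₀ ((abs_nonneg _).trans hnum) hnum (by positivity) ?_
        rw [sq]; exact mul_le_mul hĝ hg hG₀.le hĝpos.le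
    _ = (G₁ + M) / G₀ ^ 2 * (|g - ĝ| + |g' - ĝ'|) := by ring

theorem abs_div_sub_div_le (hG₀ : 0 < G₀) (hg : G₀ ≤ g) (hĝ : G₀ ≤ ĝ)
    (hg' : |g'| ≤ M) (hĝ' : |ĝ'| ≤ M) : |ĝ' / ĝ - g' / g| ≤ 2 * M / G₀ := by
  have bound : ∀ {h h' : ℝ}, G₀ ≤ h → |h'| ≤ M → |h' / h| ≤ M / G₀ := fun hh hh' => by
    rw [abs_div, abs_of_pos (hG₀.trans_le hh)]
    exact div_le_div₀ ((abs_nonneg _).trans hh') hh' hG₀ hh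
  calc |ĝ' / ĝ - g' / g| ≤ |ĝ' / ĝ| + |g' / g| := abs_sub _ _
    _ ≤ M / G₀ + M / G₀ := add_le_add (bound hĝ hĝ') (bound hg hg')
    _ = 2 * M / G₀ := by ring

theorem abs_div_sq_sub_one_le (hG₀ : 0 < G₀) (hg : 0 ≤ g) (hg₁ : g ≤ G₁)
    (hĝ : G₀ ≤ ĝ) (hĝ₁ : ĝ ≤ G₁) : |(g / ĝ) ^ 2 - 1| ≤ 2 * G₁ / G₀ ^ 2 * |g - ĝ| := by
  have hĝpos : 0 < ĝ := hG₀.trans_le hĝ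
  calc |(g / ĝ) ^ 2 - 1| = |g - ĝ| * (g + ĝ) / ĝ ^ 2 := by
        rw [show (g / ĝ) ^ 2 - 1 = (g - ĝ) * (g + ĝ) / ĝ ^ 2 by field_simp; ring, abs_div,
          abs_mul, abs_of_pos (by positivity : 0 < g + ĝ), abs_of_pos (by positivity : 0 < ĝ ^ 2)]
    _ ≤ |g - ĝ| * (2 * G₁) / G₀ ^ 2 :=
        div_le_div₀ (mul_nonneg (abs_nonneg _) (by linarith))
          (mul_le_mul_of_nonneg_left (by linarith) (abs_nonneg _)) (by positivity) (by gcongr)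
    _ = 2 * G₁ / G₀ ^ 2 * |g - ĝ| := by ring

theorem transportCoeff_div_le {t : ℝ} (hG₀ : 0 < G₀) (hg : G₀ ≤ g) (hg₁ : g ≤ G₁)
    (hĝ : G₀ ≤ ĝ) (hĝ₁ : ĝ ≤ G₁) (hg' : |g'| ≤ M) (hĝ' : |ĝ'| ≤ M) (ht : |t| ≤ G₁) :
    transportCoeff (ĝ / g) (ĝ' / ĝ - g' / g) t
      ≤ transportConst G₀ G₁ M * (|g - ĝ| + |g' - ĝ'|) := by
  refine transportCoeff_le (abs_div_sub_div_le_mul hG₀ hg hg₁ hĝ hg')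
    (abs_div_sub_div_le hG₀ hg hĝ hg' hĝ') ht ?_
  rw [inv_div]
  have hG₁ : 0 ≤ G₁ := hG₀.le.trans (hg.trans hg₁)
  exact (abs_div_sq_sub_one_le hG₀ (hG₀.le.trans hg) hg₁ hĝ hĝ₁).trans
    (mul_le_mul_of_nonneg_left (le_add_of_nonneg_right (abs_nonneg _)) (by positivity))

end Profiles

theorem abs_transportedIntegrand_div_sub_gradDot_le {L G₀ G₁ M : ℝ} {G Ĝ : ℝ → ℝ}
    {U V : ℝ × ℝ → ℝ} {z : ℝ × ℝ} (hG₀ : 0 < G₀) (hG : DifferentiableAt ℝ G z.1)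
    (hĜ : DifferentiableAt ℝ Ĝ z.1) (hV : DifferentiableAt ℝ V z) (hz : z ∈ Ystar L G)
    (hg : G₀ ≤ G z.1) (hg₁ : G z.1 ≤ G₁) (hĝ : G₀ ≤ Ĝ z.1) (hĝ₁ : Ĝ z.1 ≤ G₁)
    (hg' : |deriv G z.1| ≤ M) (hĝ' : |deriv Ĝ z.1| ≤ M) :
    |transportedIntegrand (fun x => Ĝ x / G x) U V z - gradDot U V z|
      ≤ transportConst G₀ G₁ M * (|G z.1 - Ĝ z.1| + |deriv G z.1 - deriv Ĝ z.1|)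
        * (jetNorm U z * jetNorm V z) := by
  have hG₀' : G z.1 ≠ 0 := (hG₀.trans_le hg).ne'
  have hĜ₀ : Ĝ z.1 ≠ 0 := (hG₀.trans_le hĝ).ne'
  have ht : |z.2| ≤ G₁ := by rw [abs_of_pos hz.2.1]; exact hz.2.2.le.trans hg₁
  have hF : DifferentiableAt ℝ (fun x => Ĝ x / G x) z.1 := hĜ.div hG hG₀'
  refine (abs_transportedIntegrand_sub_gradDot_le hV hF (div_ne_zero hĜ₀ hG₀')).trans
    (mul_le_mul_of_nonneg_right ?_ (mul_nonneg (jetNorm_nonneg U z) (jetNorm_nonneg V z)))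
  rw [logDeriv_div z.1 hĜ₀ hG₀' hĜ hG, logDeriv_apply, logDeriv_apply]
  exact transportCoeff_div_le hG₀ hg hg₁ hĝ hĝ₁ hg' hĝ' ht

theorem measurable_transportedIntegrand {F : ℝ → ℝ} (hF : Measurable F) (U V : ℝ × ℝ → ℝ) :
    Measurable (transportedIntegrand F U V) := by
  unfold transportedIntegrand
  fun_prop

theorem jetNorm_sq_le (W : ℝ × ℝ → ℝ) (z : ℝ × ℝ) :
    jetNorm W z ^ 2 ≤ 3 * (W z ^ 2 + pd1 W z ^ 2 + pd2 W z ^ 2) := by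
  rw [jetNorm, ← sq_abs (W z), ← sq_abs (pd1 W z), ← sq_abs (pd2 W z)]
  nlinarith [sq_nonneg (|W z| - |pd1 W z|), sq_nonneg (|W z| - |pd2 W z|),
    sq_nonneg (|pd1 W z| - |pd2 W z|)]

theorem abs_gradDot_le (U V : ℝ × ℝ → ℝ) (z : ℝ × ℝ) :
    |gradDot U V z| ≤ jetNorm U z * jetNorm V z := by
  rw [gradDot, jetNorm, jetNorm]
  have := abs_add_le (pd1 U z * pd1 V z) (pd2 U z * pd2 V z)
  rw [abs_mul, abs_mul] at this
  nlinarith [abs_nonneg (U z), abs_nonneg (pd1 U z), abs_nonneg (pd2 U z), abs_nonneg (V z),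
    abs_nonneg (pd1 V z), abs_nonneg (pd2 V z)]

section JetNorm

variable {μ : Measure (ℝ × ℝ)} {U V W : ℝ × ℝ → ℝ}

theorem memLp_jetNorm (hW : AEStronglyMeasurable W μ) (h₀ : Integrable (fun z => W z ^ 2) μ)
    (h₁ : Integrable (fun z => pd1 W z ^ 2) μ) (h₂ : Integrable (fun z => pd2 W z ^ 2) μ) :
    MemLp (jetNorm W) 2 μ := by
  have m₀ := (memLp_two_iff_integrable_sq hW).2 h₀
  have m₁ := (memLp_two_iff_integrable_sq (measurable_pd1 W).aestronglyMeasurable).2 h₁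
  have m₂ := (memLp_two_iff_integrable_sq (measurable_pd2 W).aestronglyMeasurable).2 h₂
  exact (m₀.abs.add m₁.abs).add m₂.abs

theorem integral_jetNorm_sq_le (hW : MemLp (jetNorm W) 2 μ)
    (hW' : Integrable (fun z => W z ^ 2 + pd1 W z ^ 2 + pd2 W z ^ 2) μ) :
    ∫ z, jetNorm W z ^ 2 ∂μ ≤ 3 * ∫ z, (W z ^ 2 + pd1 W z ^ 2 + pd2 W z ^ 2) ∂μ := by
  rw [← integral_const_mul]
  exact integral_mono hW.integrable_sq (hW'.const_mul 3) (jetNorm_sq_le W)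

theorem integral_jetNorm_mul_le (hU : MemLp (jetNorm U) 2 μ)
    (hU' : Integrable (fun z => U z ^ 2 + pd1 U z ^ 2 + pd2 U z ^ 2) μ)
    (hV : MemLp (jetNorm V) 2 μ)
    (hV' : Integrable (fun z => V z ^ 2 + pd1 V z ^ 2 + pd2 V z ^ 2) μ) :
    ∫ z, jetNorm U z * jetNorm V z ∂μ
      ≤ 3 * √(∫ z, (U z ^ 2 + pd1 U z ^ 2 + pd2 U z ^ 2) ∂μ)
        * √(∫ z, (V z ^ 2 + pd1 V z ^ 2 + pd2 V z ^ 2) ∂μ) := by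
  have hsqrt3 : √3 * √3 = (3 : ℝ) := Real.mul_self_sqrt (by norm_num)
  calc ∫ z, jetNorm U z * jetNorm V z ∂μ
      ≤ √(∫ z, jetNorm U z ^ 2 ∂μ) * √(∫ z, jetNorm V z ^ 2 ∂μ) :=
        integral_mul_le_sqrt_mul_sqrt (Eventually.of_forall (jetNorm_nonneg U))
          (Eventually.of_forall (jetNorm_nonneg V)) hU hV
    _ ≤ √(3 * ∫ z, (U z ^ 2 + pd1 U z ^ 2 + pd2 U z ^ 2) ∂μ)
        * √(3 * ∫ z, (V z ^ 2 + pd1 V z ^ 2 + pd2 V z ^ 2) ∂μ) := by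
        gcongr
        · exact integral_jetNorm_sq_le hU hU'
        · exact integral_jetNorm_sq_le hV hV'
    _ = 3 * √(∫ z, (U z ^ 2 + pd1 U z ^ 2 + pd2 U z ^ 2) ∂μ)
        * √(∫ z, (V z ^ 2 + pd1 V z ^ 2 + pd2 V z ^ 2) ∂μ) := by
        rw [Real.sqrt_mul (by norm_num), Real.sqrt_mul (by norm_num)]
        linear_combination (√(∫ z, (U z ^ 2 + pd1 U z ^ 2 + pd2 U z ^ 2) ∂μ)
          * √(∫ z, (V z ^ 2 + pd1 V z ^ 2 + pd2 V z ^ 2) ∂μ)) * hsqrt3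

theorem integrable_gradDot (hU : MemLp (jetNorm U) 2 μ) (hV : MemLp (jetNorm V) 2 μ) :
    Integrable (gradDot U V) μ :=
  (hU.integrable_mul hV).mono'
    (((measurable_pd1 U).mul (measurable_pd1 V)).add
      ((measurable_pd2 U).mul (measurable_pd2 V))).aestronglyMeasurable
    (Eventually.of_forall (abs_gradDot_le U V))

theorem abs_integral_sub_gradDot_le {f : ℝ × ℝ → ℝ} {c : ℝ} (hc : 0 ≤ c)
    (hf : AEStronglyMeasurable f μ) (hU : MemLp (jetNorm U) 2 μ)
    (hU' : Integrable (fun z => U z ^ 2 + pd1 U z ^ 2 + pd2 U z ^ 2) μ)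
    (hV : MemLp (jetNorm V) 2 μ)
    (hV' : Integrable (fun z => V z ^ 2 + pd1 V z ^ 2 + pd2 V z ^ 2) μ)
    (hfU : ∀ᵐ z ∂μ, |f z - gradDot U V z| ≤ c * (jetNorm U z * jetNorm V z)) :
    |∫ z, f z ∂μ - ∫ z, gradDot U V z ∂μ|
      ≤ 3 * c * √(∫ z, (U z ^ 2 + pd1 U z ^ 2 + pd2 U z ^ 2) ∂μ)
        * √(∫ z, (V z ^ 2 + pd1 V z ^ 2 + pd2 V z ^ 2) ∂μ) := by
  calc |∫ z, f z ∂μ - ∫ z, gradDot U V z ∂μ|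
      ≤ ∫ z, c * (jetNorm U z * jetNorm V z) ∂μ :=
        abs_integral_sub_le_of_abs_sub_le hf (integrable_gradDot hU hV)
          ((hU.integrable_mul hV).const_mul c) hfU
    _ = c * ∫ z, jetNorm U z * jetNorm V z ∂μ := integral_const_mul _ _
    _ ≤ c * (3 * √(∫ z, (U z ^ 2 + pd1 U z ^ 2 + pd2 U z ^ 2) ∂μ)
          * √(∫ z, (V z ^ 2 + pd1 V z ^ 2 + pd2 V z ^ 2) ∂μ)) :=
        mul_le_mul_of_nonneg_left (integral_jetNorm_mul_le hU hU' hV hV') hc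
    _ = _ := by ring

end JetNorm

theorem bilinear_form_perturbation_general
    (L G₀ G₁ M : ℝ) (hG₀ : 0 < G₀) (hG₀₁ : G₀ ≤ G₁) (hM : 0 < M) :
    ∃ C : ℝ, 0 < C ∧ ∀ G Ghat : ℝ → ℝ,
      ContDiff ℝ 1 G → (∀ x, G (x + L) = G x) →
      (∀ x, G₀ ≤ G x) → (∀ x, G x ≤ G₁) → (∀ x, |deriv G x| ≤ M) →
      ContDiff ℝ 1 Ghat → (∀ x, Ghat (x + L) = Ghat x) →
      (∀ x, G₀ ≤ Ghat x) → (∀ x, Ghat x ≤ G₁) → (∀ x, |deriv Ghat x| ≤ M) →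
      ∀ Fhat : ℝ → ℝ, (∀ x, Fhat x = Ghat x / G x) →
      ∀ U V : ℝ × ℝ → ℝ,
        ContDiffOn ℝ 1 U (Ystar L G) → ContDiffOn ℝ 1 V (Ystar L G) →
        IntegrableOn (fun z => (U z) ^ 2) (Ystar L G) →
        IntegrableOn (fun z => (pd1 U z) ^ 2) (Ystar L G) →
        IntegrableOn (fun z => (pd2 U z) ^ 2) (Ystar L G) →
        IntegrableOn (fun z => (V z) ^ 2) (Ystar L G) →
        IntegrableOn (fun z => (pd1 V z) ^ 2) (Ystar L G) →
        IntegrableOn (fun z => (pd2 V z) ^ 2) (Ystar L G) →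
        |(∫ z in Ystar L G,
            ((Fhat z.1 * pd1 U z - deriv Fhat z.1 * z.2 * pd2 U z)
                * pd1 (fun w => V w / Fhat w.1) z
              + (-(deriv Fhat z.1 * z.2 * pd1 U z)
                  + (1 / Fhat z.1) * (1 + (z.2 * deriv Fhat z.1) ^ 2) * pd2 U z)
                * pd2 (fun w => V w / Fhat w.1) z))
          - ∫ z in Ystar L G, (pd1 U z * pd1 V z + pd2 U z * pd2 V z)|
        ≤ C * ((⨆ x, |G x - Ghat x|) + ⨆ x, |deriv G x - deriv Ghat x|)
            * Hnorm L G U * Hnorm L G V := by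
  set K := transportConst G₀ G₁ M
  have hK : 0 < K := transportConst_pos hG₀ (hG₀.trans_le hG₀₁) hM.le
  refine ⟨3 * K, by positivity, ?_⟩
  intro G Ĝ hG _ hG₀G hGG₁ hG' hĜ _ hG₀Ĝ hĜG₁ hĜ' F hF U V hU hV hU₀ hU₁ hU₂ hV₀ hV₁ hV₂
  obtain rfl : F = fun x => Ĝ x / G x := funext hF
  set δ := (⨆ x, |G x - Ĝ x|) + ⨆ x, |deriv G x - deriv Ĝ x|
  have hδ : ∀ x, |G x - Ĝ x| + |deriv G x - deriv Ĝ x| ≤ δ := fun x => add_le_add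
    (abs_sub_le_iSup_abs_sub (fun y => ⟨hG₀G y, hGG₁ y⟩) (fun y => ⟨hG₀Ĝ y, hĜG₁ y⟩) x)
    (abs_sub_le_iSup_abs_sub (fun y => abs_le.1 (hG' y)) (fun y => abs_le.1 (hĜ' y)) x)
  have hs : IsOpen (Ystar L G) := isOpen_Ystar L hG.continuous
  have hpt : ∀ z ∈ Ystar L G,
      |transportedIntegrand (fun x => Ĝ x / G x) U V z - gradDot U V z|
        ≤ K * δ * (jetNorm U z * jetNorm V z) := fun z hz =>
    (abs_transportedIntegrand_div_sub_gradDot_le hG₀ (hG.differentiable one_ne_zero z.1)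
      (hĜ.differentiable one_ne_zero z.1) ((hV.differentiableOn one_ne_zero).differentiableAt
        (hs.mem_nhds hz)) hz (hG₀G _) (hGG₁ _) (hG₀Ĝ _) (hĜG₁ _) (hG' _) (hĜ' _)).trans
    (mul_le_mul_of_nonneg_right (mul_le_mul_of_nonneg_left (hδ z.1) hK.le)
      (mul_nonneg (jetNorm_nonneg U z) (jetNorm_nonneg V z)))
  have hFm : Measurable fun x => Ĝ x / G x :=
    (hĜ.continuous.div hG.continuous fun x => (hG₀.trans_le (hG₀G x)).ne').measurable
  show |(∫ z in Ystar L G, transportedIntegrand (fun x => Ĝ x / G x) U V z)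
      - ∫ z in Ystar L G, gradDot U V z| ≤ _
  refine (abs_integral_sub_gradDot_le (mul_nonneg hK.le
    ((add_nonneg (abs_nonneg _) (abs_nonneg _)).trans (hδ 0)))
    (measurable_transportedIntegrand hFm U V).aestronglyMeasurable
    (memLp_jetNorm (hU.continuousOn.aestronglyMeasurable hs.measurableSet) hU₀ hU₁ hU₂)
    ((hU₀.add hU₁).add hU₂)
    (memLp_jetNorm (hV.continuousOn.aestronglyMeasurable hs.measurableSet) hV₀ hV₁ hV₂)
    ((hV₀.add hV₁).add hV₂)
    ((ae_restrict_iff' hs.measurableSet).2 (Eventually.of_forall hpt))).trans_eq ?_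
  rw [Hnorm, Hnorm]
  ring

/-- **The perturbation estimate (A.8)/(EK1) of the Appendix of the paper**: there is a
constant `C = C(G₀,G₁,M)` such that for all profiles `G, Ghat` in the admissible class
`A(M)` (C¹, `L`-periodic, `G₀ ≤ G ≤ G₁`, `|G'| ≤ M`), writing `Fhat = Ghat/G`, the
transported bilinear form `ρ_Ghat(U,V) = ∫_{Y*(G)} B_FhatU · ∇(V/Fhat)` differs from
`ρ_G(U,V) = ∫_{Y*(G)} ∇U · ∇V` by at most
`C (sup|G−Ghat| + sup|G'−Ghat'|) ‖U‖_H ‖V‖_H`. -/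
theorem bilinear_form_perturbation
    (L G₀ G₁ M : ℝ) (hL : 0 < L) (hG₀ : 0 < G₀) (hG₀₁ : G₀ ≤ G₁) (hM : 0 < M) :
    ∃ C : ℝ, 0 < C ∧ ∀ G Ghat : ℝ → ℝ,
      ContDiff ℝ 1 G → (∀ x, G (x + L) = G x) →
      (∀ x, G₀ ≤ G x) → (∀ x, G x ≤ G₁) → (∀ x, |deriv G x| ≤ M) →
      ContDiff ℝ 1 Ghat → (∀ x, Ghat (x + L) = Ghat x) →
      (∀ x, G₀ ≤ Ghat x) → (∀ x, Ghat x ≤ G₁) → (∀ x, |deriv Ghat x| ≤ M) →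
      ∀ Fhat : ℝ → ℝ, (∀ x, Fhat x = Ghat x / G x) →
      ∀ U V : ℝ × ℝ → ℝ,
        ContDiffOn ℝ 1 U (Ystar L G) → ContDiffOn ℝ 1 V (Ystar L G) →
        IntegrableOn (fun z => (U z) ^ 2) (Ystar L G) →
        IntegrableOn (fun z => (pd1 U z) ^ 2) (Ystar L G) →
        IntegrableOn (fun z => (pd2 U z) ^ 2) (Ystar L G) →
        IntegrableOn (fun z => (V z) ^ 2) (Ystar L G) →
        IntegrableOn (fun z => (pd1 V z) ^ 2) (Ystar L G) →
        IntegrableOn (fun z => (pd2 V z) ^ 2) (Ystar L G) →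
        |(∫ z in Ystar L G,
            ((Fhat z.1 * pd1 U z - deriv Fhat z.1 * z.2 * pd2 U z)
                * pd1 (fun w => V w / Fhat w.1) z
              + (-(deriv Fhat z.1 * z.2 * pd1 U z)
                  + (1 / Fhat z.1) * (1 + (z.2 * deriv Fhat z.1) ^ 2) * pd2 U z)
                * pd2 (fun w => V w / Fhat w.1) z))
          - ∫ z in Ystar L G, (pd1 U z * pd1 V z + pd2 U z * pd2 V z)|
        ≤ C * ((⨆ x, |G x - Ghat x|) + ⨆ x, |deriv G x - deriv Ghat x|)
            * Hnorm L G U * Hnorm L G V :=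
  bilinear_form_perturbation_general L G₀ G₁ M hG₀ hG₀₁ hM
end

section
/- Let L > 0, G₀ > 0, and let G : ℝ → ℝ be a C¹, L-periodic function with G(y) ≥ G₀ for all y. Let S = {(y₁,y₂) ∈ ℝ² : 0 < y₂ < G(y₁)}, and let X : ℝ² → ℝ be L-periodic in its first variable, C² on S with partial derivatives extending continuously to the closure of S, and satisfying: ΔX = 0 in S; ∂₂X(y₁, 0) = 0 for all y₁; and ∇X(y₁, G(y₁)) · (−G'(y₁), 1) = −G'(y₁) for all y₁ (the Neumann condition ∂X/∂N = N₁ on the oscillating boundary). Fix ε > 0 and let Ω^ε = {(x₁,x₂) : 0 < x₁ < 1, 0 < x₂ < G(x₁/ε)}, and define on Ω^ε the functions η₁^ε(x₁,x₂) = 1 − ∂₁X(x₁/ε, x₂) and η₂^ε(x₁,x₂) = −ε ∂₂X(x₁/ε, x₂). Then for every smooth function φ : ℝ² → ℝ with compact support contained in (0,1) × ℝ, ∫_{Ω^ε} ( η₁^ε ∂₁φ + ε⁻² η₂^ε ∂₂φ ) dx₁ dx₂ = 0. -/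
open MeasureTheory Set Filter Topology

set_option maxHeartbeats 1600000

noncomputable section OscDivFreeAux

namespace OscDivFree

/-- scaled profile `g(t) = G(t/ε)`. -/
def gA (G : ℝ → ℝ) (ε t : ℝ) : ℝ := G (t / ε)

/-- derivative of the scaled profile. -/
def dgA (G : ℝ → ℝ) (ε t : ℝ) : ℝ := deriv G (t / ε) / ε

/-- map from the reference rectangle to the physical domain. -/
def mA (G : ℝ → ℝ) (ε : ℝ) (p : ℝ × ℝ) : ℝ × ℝ := (p.1, p.2 * gA G ε p.1)

/-- map from the reference rectangle to the cell variable. -/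
def vA (G : ℝ → ℝ) (ε : ℝ) (p : ℝ × ℝ) : ℝ × ℝ := (p.1 / ε, p.2 * gA G ε p.1)

/-- the integrand of the weak divergence identity. -/
def WA (ε : ℝ) (φ η₁ η₂ : ℝ × ℝ → ℝ) (x : ℝ × ℝ) : ℝ :=
  η₁ x * fderiv ℝ φ x ((1 : ℝ), (0 : ℝ)) + 1 / ε ^ 2 * (η₂ x * fderiv ℝ φ x ((0 : ℝ), (1 : ℝ)))

/-- horizontal component of the transported field times the test function. -/
def FA (G : ℝ → ℝ) (ε : ℝ) (φ D1 : ℝ × ℝ → ℝ) (p : ℝ × ℝ) : ℝ :=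
  gA G ε p.1 * (φ (mA G ε p) * (1 - D1 (vA G ε p)))

/-- vertical component of the transported field times the test function. -/
def KA (G : ℝ → ℝ) (ε : ℝ) (φ D1 D2 : ℝ × ℝ → ℝ) (p : ℝ × ℝ) : ℝ :=
  φ (mA G ε p) * (-(p.2 * dgA G ε p.1) * (1 - D1 (vA G ε p)) - ε⁻¹ * D2 (vA G ε p))

/-- the partial derivative `∂₁ FA`. -/
def F1A (G : ℝ → ℝ) (ε : ℝ) (φ D1 : ℝ × ℝ → ℝ) (p : ℝ × ℝ) : ℝ :=
  dgA G ε p.1 * (φ (mA G ε p) * (1 - D1 (vA G ε p))) +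
    gA G ε p.1 *
      (fderiv ℝ φ (mA G ε p) (1, p.2 * dgA G ε p.1) * (1 - D1 (vA G ε p)) +
        φ (mA G ε p) * -(fderiv ℝ D1 (vA G ε p) (1 / ε, p.2 * dgA G ε p.1)))

/-- the partial derivative `∂₂ KA`. -/
def K2A (G : ℝ → ℝ) (ε : ℝ) (φ D1 D2 : ℝ × ℝ → ℝ) (p : ℝ × ℝ) : ℝ :=
  fderiv ℝ φ (mA G ε p) (0, gA G ε p.1) *
      (-(p.2 * dgA G ε p.1) * (1 - D1 (vA G ε p)) - ε⁻¹ * D2 (vA G ε p)) +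
    φ (mA G ε p) *
      (-(dgA G ε p.1) * (1 - D1 (vA G ε p)) +
          -(p.2 * dgA G ε p.1) * -(fderiv ℝ D1 (vA G ε p) (0, gA G ε p.1)) -
        ε⁻¹ * fderiv ℝ D2 (vA G ε p) (0, gA G ε p.1))

/-- the shrunk domains. -/
def ΩA (G : ℝ → ℝ) (ε δ : ℝ) : Set (ℝ × ℝ) :=
  {x : ℝ × ℝ | x.1 ∈ Ioo (0 : ℝ) 1 ∧ x.2 ∈ Ioo (δ * gA G ε x.1) ((1 - δ) * gA G ε x.1)}

end OscDivFree

end OscDivFreeAux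

open OscDivFree

/-- **The divergence-free property (3.7)/(equation-final) of the oscillating test field**
built from the solution `X` of the auxiliary cell problem (1.5) of the paper: if `X` is
harmonic in `S = {0 < y₂ < G(y₁)}`, `L`-periodic in `y₁`, with `∂₂X = 0` on the bottom
boundary and `∇X·(−G',1) = −G'` on the oscillating top boundary (partial derivatives
`D1, D2` extending continuously to the closure of `S`), then the field
`η₁^ε(x) = 1 − ∂₁X(x₁/ε,x₂)`, `η₂^ε(x) = −ε ∂₂X(x₁/ε,x₂)` satisfies
`∫_{Ω^ε} (η₁^ε ∂₁φ + ε⁻² η₂^ε ∂₂φ) = 0` for every smooth `φ` with compact support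
contained in `(0,1) × ℝ`. -/
theorem oscillating_test_field_divergence_free
    (L G₀ : ℝ) (hL : 0 < L) (hG₀ : 0 < G₀)
    (G : ℝ → ℝ) (hG : ContDiff ℝ 1 G) (hper : ∀ y, G (y + L) = G y)
    (hGlb : ∀ y, G₀ ≤ G y)
    (S : Set (ℝ × ℝ)) (hS : S = {y : ℝ × ℝ | 0 < y.2 ∧ y.2 < G y.1})
    (X D1 D2 : ℝ × ℝ → ℝ)
    (hXper : ∀ y₁ y₂ : ℝ, X (y₁ + L, y₂) = X (y₁, y₂))
    (hXC2 : ContDiffOn ℝ 2 X S)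
    (hD1 : ∀ y ∈ S, D1 y = fderiv ℝ X y (1, 0))
    (hD2 : ∀ y ∈ S, D2 y = fderiv ℝ X y (0, 1))
    (hD1c : ContinuousOn D1 (closure S)) (hD2c : ContinuousOn D2 (closure S))
    (hharm : ∀ y ∈ S, fderiv ℝ D1 y ((1:ℝ), (0:ℝ)) + fderiv ℝ D2 y ((0:ℝ), (1:ℝ)) = 0)
    (hbot : ∀ y₁ : ℝ, D2 (y₁, 0) = 0)
    (htop : ∀ y₁ : ℝ,
      D1 (y₁, G y₁) * (-(deriv G y₁)) + D2 (y₁, G y₁) = -(deriv G y₁))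
    (ε : ℝ) (hε : 0 < ε)
    (Ωε : Set (ℝ × ℝ))
    (hΩε : Ωε = {x : ℝ × ℝ | x.1 ∈ Ioo (0:ℝ) 1 ∧ x.2 ∈ Ioo 0 (G (x.1 / ε))})
    (η₁ η₂ : ℝ × ℝ → ℝ)
    (hη₁ : ∀ x : ℝ × ℝ, η₁ x = 1 - D1 (x.1 / ε, x.2))
    (hη₂ : ∀ x : ℝ × ℝ, η₂ x = -ε * D2 (x.1 / ε, x.2)) :
    ∀ φ : ℝ × ℝ → ℝ, ContDiff ℝ (⊤ : ℕ∞) φ → HasCompactSupport φ →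
      tsupport φ ⊆ Ioo (0:ℝ) 1 ×ˢ (univ : Set ℝ) →
      ∫ x in Ωε, (η₁ x * fderiv ℝ φ x ((1:ℝ), (0:ℝ))
        + (1 / ε ^ 2) * (η₂ x * fderiv ℝ φ x ((0:ℝ), (1:ℝ)))) = 0 := by
  intro φ hφ hφc hφs
  have hεne : ε ≠ 0 := ne_of_gt hε
  have hGpos : ∀ y, 0 < G y := fun y => hG₀.trans_le (hGlb y)
  have hGc : Continuous G := hG.continuous
  have hG'c : Continuous (deriv G) := hG.continuous_deriv le_rfl
  have hGd : Differentiable ℝ G := hG.differentiable one_ne_zero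
  -- `g` facts
  have hgc : Continuous (gA G ε) := by
    unfold gA; exact hGc.comp (continuous_id.div_const ε)
  have hdgc : Continuous (dgA G ε) := by
    unfold dgA; exact (hG'c.comp (continuous_id.div_const ε)).div_const ε
  have hgpos : ∀ t, 0 < gA G ε t := fun t => hGpos _
  have hgd : ∀ t, HasDerivAt (gA G ε) (dgA G ε t) t := by
    intro t
    have h1 : HasDerivAt (fun u : ℝ => u / ε) (1 / ε) t := by
      simpa using (hasDerivAt_id t).div_const ε
    have h2 : HasDerivAt G (deriv G (t / ε)) (t / ε) := (hGd (t / ε)).hasDerivAt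
    have h3 := h2.comp t h1
    have h4 : deriv G (t / ε) * (1 / ε) = dgA G ε t := by
      unfold dgA; field_simp
    rw [← h4]; exact h3
  -- `S` facts
  have hSopen : IsOpen S := by
    rw [hS, show {y : ℝ × ℝ | 0 < y.2 ∧ y.2 < G y.1}
        = {y : ℝ × ℝ | 0 < y.2} ∩ {y : ℝ × ℝ | y.2 < G y.1} from rfl]
    exact (isOpen_lt continuous_const continuous_snd).inter
      (isOpen_lt continuous_snd (hGc.comp continuous_fst))
  have hclos : ∀ y : ℝ × ℝ, 0 ≤ y.2 → y.2 ≤ G y.1 → y ∈ closure S := by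
    intro y h0 h1
    have hθ : Tendsto (fun n : ℕ => (1:ℝ) / (n + 1)) atTop (𝓝 0) :=
      tendsto_one_div_add_atTop_nhds_zero_nat
    set z : ℕ → ℝ × ℝ := fun n => (y.1, y.2 + (1 / (n + 1)) * (G y.1 / 2 - y.2)) with hz
    have hzmem : ∀ n, z n ∈ S := by
      intro n
      have hθ0 : (0:ℝ) < 1 / (n + 1) := by positivity
      have hθ1 : (1:ℝ) / (n + 1) ≤ 1 := by
        rw [div_le_one (by positivity)]
        have : (0:ℝ) ≤ n := Nat.cast_nonneg n
        linarith
      rw [hS]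
      constructor
      · show (0:ℝ) < y.2 + (1 / (n + 1)) * (G y.1 / 2 - y.2)
        nlinarith [hGpos y.1]
      · show y.2 + (1 / (n + 1)) * (G y.1 / 2 - y.2) < G y.1
        nlinarith [hGpos y.1]
    have hzlim : Tendsto z atTop (𝓝 y) := by
      rw [hz]
      have h2 : Tendsto (fun n : ℕ => y.2 + (1 / (n + 1 : ℝ)) * (G y.1 / 2 - y.2)) atTop
          (𝓝 y.2) := by
        have h3 := hθ.mul_const (G y.1 / 2 - y.2)
        have h := (tendsto_const_nhds (x := y.2) (f := atTop (α := ℕ))).add h3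
        simpa using h
      exact (Prod.tendsto_iff _ _).2 ⟨tendsto_const_nhds, h2⟩
    exact mem_closure_of_tendsto hzlim (Eventually.of_forall hzmem)
  have hmemS : ∀ t s : ℝ, 0 < s → s < 1 → ((t / ε, s * gA G ε t) : ℝ × ℝ) ∈ S := by
    intro t s hs0 hs1
    rw [hS]
    constructor
    · exact mul_pos hs0 (hgpos t)
    · show s * gA G ε t < G (t / ε)
      have : s * gA G ε t < 1 * gA G ε t :=
        mul_lt_mul_of_pos_right hs1 (hgpos t)
      simpa [gA] using this
  have hmemC : ∀ t s : ℝ, 0 ≤ s → s ≤ 1 → ((t / ε, s * gA G ε t) : ℝ × ℝ) ∈ closure S := by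
    intro t s hs0 hs1
    refine hclos _ (mul_nonneg hs0 (hgpos t).le) ?_
    show s * gA G ε t ≤ G (t / ε)
    have : s * gA G ε t ≤ 1 * gA G ε t :=
      mul_le_mul_of_nonneg_right hs1 (hgpos t).le
    simpa [gA] using this
  -- differentiability of D1, D2 inside S
  have hfX : ContDiffOn ℝ 1 (fderiv ℝ X) S := hXC2.fderiv_of_isOpen hSopen (by norm_num)
  have hA1 : ContDiffOn ℝ 1 (fun y => fderiv ℝ X y (1, 0)) S := hfX.clm_apply contDiffOn_const
  have hA2 : ContDiffOn ℝ 1 (fun y => fderiv ℝ X y (0, 1)) S := hfX.clm_apply contDiffOn_const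
  have hev1 : ∀ y ∈ S, D1 =ᶠ[𝓝 y] fun z => fderiv ℝ X z (1, 0) := fun y hy =>
    eventually_of_mem (hSopen.mem_nhds hy) fun z hz => hD1 z hz
  have hev2 : ∀ y ∈ S, D2 =ᶠ[𝓝 y] fun z => fderiv ℝ X z (0, 1) := fun y hy =>
    eventually_of_mem (hSopen.mem_nhds hy) fun z hz => hD2 z hz
  have hD1d : ∀ y ∈ S, DifferentiableAt ℝ D1 y := by
    intro y hy
    exact ((hA1.differentiableOn one_ne_zero y hy).differentiableAt
      (hSopen.mem_nhds hy)).congr_of_eventuallyEq (hev1 y hy)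
  have hD2d : ∀ y ∈ S, DifferentiableAt ℝ D2 y := by
    intro y hy
    exact ((hA2.differentiableOn one_ne_zero y hy).differentiableAt
      (hSopen.mem_nhds hy)).congr_of_eventuallyEq (hev2 y hy)
  have hfD1c : ContinuousOn (fderiv ℝ D1) S :=
    (hA1.continuousOn_fderiv_of_isOpen hSopen le_rfl).congr
      fun y hy => (hev1 y hy).fderiv_eq
  have hfD2c : ContinuousOn (fderiv ℝ D2) S :=
    (hA2.continuousOn_fderiv_of_isOpen hSopen le_rfl).congr
      fun y hy => (hev2 y hy).fderiv_eq
  -- φ facts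
  have hφd : Differentiable ℝ φ := hφ.differentiable (by simp)
  have hφcont : Continuous φ := hφ.continuous
  have hφ'c : Continuous (fderiv ℝ φ) := hφ.continuous_fderiv (by simp)
  have hφ0 : ∀ z : ℝ × ℝ, z.1 ∉ Ioo (0 : ℝ) 1 → φ z = 0 := by
    intro z hz
    apply image_eq_zero_of_notMem_tsupport
    intro hmem
    exact hz (hφs hmem).1
  -- key derivative computations
  have hFderiv : ∀ s ∈ Ioo (0:ℝ) 1, ∀ t : ℝ,
      HasDerivAt (fun u => FA G ε φ D1 (u, s)) (F1A G ε φ D1 (t, s)) t := by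
    intro s hs t
    have hy : ((t / ε, s * gA G ε t) : ℝ × ℝ) ∈ S := hmemS t s hs.1 hs.2
    have hgt := hgd t
    have hpx : HasDerivAt (fun u : ℝ => ((u, s * gA G ε u) : ℝ × ℝ)) ((1:ℝ), s * dgA G ε t) t :=
      (hasDerivAt_id t).prodMk (hgt.const_mul s)
    have hpy : HasDerivAt (fun u : ℝ => ((u / ε, s * gA G ε u) : ℝ × ℝ))
        ((1:ℝ)/ε, s * dgA G ε t) t := by
      refine HasDerivAt.prodMk ?_ (hgt.const_mul s)
      simpa using (hasDerivAt_id t).div_const ε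
    have hφp : HasDerivAt (fun u : ℝ => φ (u, s * gA G ε u))
        (fderiv ℝ φ (t, s * gA G ε t) (1, s * dgA G ε t)) t :=
      ((hφd _).hasFDerivAt.comp_hasDerivAt t hpx)
    have hD1p : HasDerivAt (fun u : ℝ => D1 (u / ε, s * gA G ε u))
        (fderiv ℝ D1 (t / ε, s * gA G ε t) (1/ε, s * dgA G ε t)) t :=
      ((hD1d _ hy).hasFDerivAt.comp_hasDerivAt t hpy)
    have h2 : HasDerivAt (fun u : ℝ => 1 - D1 (u / ε, s * gA G ε u))
        (-(fderiv ℝ D1 (t / ε, s * gA G ε t) (1/ε, s * dgA G ε t))) t := hD1p.const_sub 1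
    exact hgt.mul (hφp.mul h2)
  have hKderiv : ∀ (t : ℝ), ∀ s ∈ Ioo (0:ℝ) 1,
      HasDerivAt (fun u => KA G ε φ D1 D2 (t, u)) (K2A G ε φ D1 D2 (t, s)) s := by
    intro t s hs
    have hy : ((t / ε, s * gA G ε t) : ℝ × ℝ) ∈ S := hmemS t s hs.1 hs.2
    have hpx : HasDerivAt (fun u : ℝ => ((t, u * gA G ε t) : ℝ × ℝ)) ((0:ℝ), gA G ε t) s :=
      (hasDerivAt_const s t).prodMk (hasDerivAt_mul_const (gA G ε t))
    have hpy : HasDerivAt (fun u : ℝ => ((t / ε, u * gA G ε t) : ℝ × ℝ)) ((0:ℝ), gA G ε t) s :=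
      (hasDerivAt_const s (t / ε)).prodMk (hasDerivAt_mul_const (gA G ε t))
    have hφp : HasDerivAt (fun u : ℝ => φ (t, u * gA G ε t))
        (fderiv ℝ φ (t, s * gA G ε t) (0, gA G ε t)) s :=
      ((hφd _).hasFDerivAt.comp_hasDerivAt s hpx)
    have hD1p : HasDerivAt (fun u : ℝ => D1 (t / ε, u * gA G ε t))
        (fderiv ℝ D1 (t / ε, s * gA G ε t) (0, gA G ε t)) s :=
      ((hD1d _ hy).hasFDerivAt.comp_hasDerivAt s hpy)
    have hD2p : HasDerivAt (fun u : ℝ => D2 (t / ε, u * gA G ε t))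
        (fderiv ℝ D2 (t / ε, s * gA G ε t) (0, gA G ε t)) s :=
      ((hD2d _ hy).hasFDerivAt.comp_hasDerivAt s hpy)
    have h1 : HasDerivAt (fun u : ℝ => -(u * dgA G ε t)) (-(dgA G ε t)) s :=
      (hasDerivAt_mul_const (dgA G ε t)).neg
    have h2 : HasDerivAt (fun u : ℝ => 1 - D1 (t / ε, u * gA G ε t))
        (-(fderiv ℝ D1 (t / ε, s * gA G ε t) (0, gA G ε t))) s := hD1p.const_sub 1
    exact hφp.mul ((h1.mul h2).sub (hD2p.const_mul ε⁻¹))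
  -- the pointwise divergence identity
  have hsum : ∀ p : ℝ × ℝ, p.2 ∈ Ioo (0:ℝ) 1 →
      F1A G ε φ D1 p + K2A G ε φ D1 D2 p = gA G ε p.1 * WA ε φ η₁ η₂ (mA G ε p) := by
    intro p hp
    have hy : vA G ε p ∈ S := hmemS p.1 p.2 hp.1 hp.2
    have harm := hharm _ hy
    have e1 : fderiv ℝ φ (mA G ε p) (1, p.2 * dgA G ε p.1)
        = fderiv ℝ φ (mA G ε p) (1, 0) + (p.2 * dgA G ε p.1) * fderiv ℝ φ (mA G ε p) (0, 1) := by
      have h : ((1:ℝ), p.2 * dgA G ε p.1)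
          = ((1:ℝ), (0:ℝ)) + (p.2 * dgA G ε p.1) • ((0:ℝ), (1:ℝ)) := by
        simp [Prod.ext_iff]
      rw [h, map_add, _root_.map_smul, smul_eq_mul]
    have e2 : fderiv ℝ φ (mA G ε p) (0, gA G ε p.1)
        = gA G ε p.1 * fderiv ℝ φ (mA G ε p) (0, 1) := by
      have h : ((0:ℝ), gA G ε p.1) = (gA G ε p.1) • ((0:ℝ), (1:ℝ)) := by simp [Prod.ext_iff]
      rw [h, _root_.map_smul, smul_eq_mul]
    have e3 : fderiv ℝ D1 (vA G ε p) (1 / ε, p.2 * dgA G ε p.1)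
        = (1/ε) * fderiv ℝ D1 (vA G ε p) (1, 0)
          + (p.2 * dgA G ε p.1) * fderiv ℝ D1 (vA G ε p) (0, 1) := by
      have h : ((1/ε : ℝ), p.2 * dgA G ε p.1)
          = (1/ε : ℝ) • ((1:ℝ), (0:ℝ)) + (p.2 * dgA G ε p.1) • ((0:ℝ), (1:ℝ)) := by
        simp [Prod.ext_iff]
      rw [h, map_add, _root_.map_smul, _root_.map_smul, smul_eq_mul, smul_eq_mul]
    have e4 : fderiv ℝ D1 (vA G ε p) (0, gA G ε p.1)
        = gA G ε p.1 * fderiv ℝ D1 (vA G ε p) (0, 1) := by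
      have h : ((0:ℝ), gA G ε p.1) = (gA G ε p.1) • ((0:ℝ), (1:ℝ)) := by simp [Prod.ext_iff]
      rw [h, _root_.map_smul, smul_eq_mul]
    have e5 : fderiv ℝ D2 (vA G ε p) (0, gA G ε p.1)
        = gA G ε p.1 * fderiv ℝ D2 (vA G ε p) (0, 1) := by
      have h : ((0:ℝ), gA G ε p.1) = (gA G ε p.1) • ((0:ℝ), (1:ℝ)) := by simp [Prod.ext_iff]
      rw [h, _root_.map_smul, smul_eq_mul]
    have hB2 : fderiv ℝ D2 (vA G ε p) ((0:ℝ), (1:ℝ))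
        = -(fderiv ℝ D1 (vA G ε p) ((1:ℝ), (0:ℝ))) := by linarith
    have hmv : η₁ (mA G ε p) = 1 - D1 (vA G ε p) := by rw [hη₁]; rfl
    have hmv2 : η₂ (mA G ε p) = -ε * D2 (vA G ε p) := by rw [hη₂]; rfl
    rw [F1A, K2A, WA, hmv, hmv2, e1, e2, e3, e4, e5, hB2]
    field_simp
    ring
  -- continuity facts
  have hF1K2c : ContinuousOn (F1A G ε φ D1) {p : ℝ × ℝ | 0 < p.2 ∧ p.2 < 1}
      ∧ ContinuousOn (K2A G ε φ D1 D2) {p : ℝ × ℝ | 0 < p.2 ∧ p.2 < 1} := by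
    have hvc : Continuous (vA G ε) :=
      (continuous_fst.div_const ε).prodMk (continuous_snd.mul (hgc.comp continuous_fst))
    have hmc : Continuous (mA G ε) :=
      continuous_fst.prodMk (continuous_snd.mul (hgc.comp continuous_fst))
    have hmapsS : MapsTo (vA G ε) {p : ℝ × ℝ | 0 < p.2 ∧ p.2 < 1} S := by
      intro p hp; exact hmemS p.1 p.2 hp.1 hp.2
    have hmapsC : MapsTo (vA G ε) {p : ℝ × ℝ | 0 < p.2 ∧ p.2 < 1} (closure S) := by
      intro p hp; exact hmemC p.1 p.2 hp.1.le hp.2.le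
    set U := {p : ℝ × ℝ | 0 < p.2 ∧ p.2 < 1}
    have hD1v : ContinuousOn (fun p => D1 (vA G ε p)) U := hD1c.comp hvc.continuousOn hmapsC
    have hD2v : ContinuousOn (fun p => D2 (vA G ε p)) U := hD2c.comp hvc.continuousOn hmapsC
    have hfD1v : ContinuousOn (fun p => fderiv ℝ D1 (vA G ε p)) U :=
      hfD1c.comp hvc.continuousOn hmapsS
    have hfD2v : ContinuousOn (fun p => fderiv ℝ D2 (vA G ε p)) U :=
      hfD2c.comp hvc.continuousOn hmapsS
    have hφm : Continuous (fun p => φ (mA G ε p)) := hφcont.comp hmc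
    have hφ'm : Continuous (fun p => fderiv ℝ φ (mA G ε p)) := hφ'c.comp hmc
    have hgf : Continuous (fun p : ℝ × ℝ => gA G ε p.1) := hgc.comp continuous_fst
    have hdgf : Continuous (fun p : ℝ × ℝ => dgA G ε p.1) := hdgc.comp continuous_fst
    have hvec1 : Continuous (fun p : ℝ × ℝ => ((1:ℝ), p.2 * dgA G ε p.1)) :=
      continuous_const.prodMk (continuous_snd.mul hdgf)
    have hvec2 : Continuous (fun p : ℝ × ℝ => ((1/ε : ℝ), p.2 * dgA G ε p.1)) :=
      continuous_const.prodMk (continuous_snd.mul hdgf)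
    have hvec3 : Continuous (fun p : ℝ × ℝ => ((0:ℝ), gA G ε p.1)) :=
      continuous_const.prodMk hgf
    constructor
    · unfold F1A
      apply ContinuousOn.add
      · exact (hdgf.continuousOn).mul (hφm.continuousOn.mul (continuousOn_const.sub hD1v))
      · apply (hgf.continuousOn).mul
        apply ContinuousOn.add
        · exact ((hφ'm.clm_apply hvec1).continuousOn).mul (continuousOn_const.sub hD1v)
        · exact hφm.continuousOn.mul (hfD1v.clm_apply hvec2.continuousOn).neg
    · unfold K2A
      apply ContinuousOn.add
      · apply ((hφ'm.clm_apply hvec3).continuousOn).mul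
        exact ((continuous_snd.mul hdgf).neg.continuousOn.mul
          (continuousOn_const.sub hD1v)).sub (continuousOn_const.mul hD2v)
      · apply hφm.continuousOn.mul
        apply ContinuousOn.sub
        · exact (hdgf.neg.continuousOn.mul (continuousOn_const.sub hD1v)).add
            ((continuous_snd.mul hdgf).neg.continuousOn.mul
              (hfD1v.clm_apply hvec3.continuousOn).neg)
        · exact continuousOn_const.mul (hfD2v.clm_apply hvec3.continuousOn)
  have hF1c := hF1K2c.1
  have hK2c := hF1K2c.2
  have hKc : ContinuousOn (KA G ε φ D1 D2) {p : ℝ × ℝ | 0 ≤ p.2 ∧ p.2 ≤ 1} := by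
    have hvc : Continuous (vA G ε) :=
      (continuous_fst.div_const ε).prodMk (continuous_snd.mul (hgc.comp continuous_fst))
    have hmc : Continuous (mA G ε) :=
      continuous_fst.prodMk (continuous_snd.mul (hgc.comp continuous_fst))
    have hmapsC : MapsTo (vA G ε) {p : ℝ × ℝ | 0 ≤ p.2 ∧ p.2 ≤ 1} (closure S) := by
      intro p hp; exact hmemC p.1 p.2 hp.1 hp.2
    have hD1v : ContinuousOn (fun p => D1 (vA G ε p)) _ := hD1c.comp hvc.continuousOn hmapsC
    have hD2v : ContinuousOn (fun p => D2 (vA G ε p)) _ := hD2c.comp hvc.continuousOn hmapsC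
    unfold KA
    apply ContinuousOn.mul ((hφcont.comp hmc).continuousOn)
    apply ContinuousOn.sub
    · exact (continuous_snd.mul (hdgc.comp continuous_fst)).neg.continuousOn.mul
        (continuousOn_const.sub hD1v)
    · exact continuousOn_const.mul hD2v
  -- boundary values of K
  have hK0 : ∀ t : ℝ, KA G ε φ D1 D2 (t, 0) = 0 := by
    intro t
    simp [KA, vA, mA, hbot]
  have hK1 : ∀ t : ℝ, KA G ε φ D1 D2 (t, 1) = 0 := by
    intro t
    have hv : vA G ε (t, 1) = (t / ε, G (t / ε)) := by simp [vA, gA]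
    have h := htop (t / ε)
    have hD2eq : D2 (t / ε, G (t / ε))
        = -(deriv G (t / ε)) + D1 (t / ε, G (t / ε)) * deriv G (t / ε) := by linarith
    rw [KA, hv]
    rw [show ((t,(1:ℝ)).2 * dgA G ε (t,1).1) = deriv G (t / ε) / ε by simp [dgA]]
    apply mul_eq_zero_of_right
    rw [hD2eq]
    field_simp
    ring
  -- W facts
  have hWcont : ContinuousOn (WA ε φ η₁ η₂) {x : ℝ × ℝ | 0 ≤ x.2 ∧ x.2 ≤ gA G ε x.1} := by
    have hσ : Continuous (fun x : ℝ × ℝ => ((x.1 / ε, x.2) : ℝ × ℝ)) :=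
      (continuous_fst.div_const ε).prodMk continuous_snd
    have hmaps : MapsTo (fun x : ℝ × ℝ => ((x.1 / ε, x.2) : ℝ × ℝ))
        {x : ℝ × ℝ | 0 ≤ x.2 ∧ x.2 ≤ gA G ε x.1} (closure S) := by
      intro x hx; exact hclos _ hx.1 hx.2
    have hη₁c : ContinuousOn η₁ {x : ℝ × ℝ | 0 ≤ x.2 ∧ x.2 ≤ gA G ε x.1} := by
      have h : ContinuousOn (fun x : ℝ × ℝ => 1 - D1 (x.1 / ε, x.2)) _ :=
        continuousOn_const.sub (hD1c.comp hσ.continuousOn hmaps)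
      exact h.congr fun x _ => hη₁ x
    have hη₂c : ContinuousOn η₂ {x : ℝ × ℝ | 0 ≤ x.2 ∧ x.2 ≤ gA G ε x.1} := by
      have h : ContinuousOn (fun x : ℝ × ℝ => -ε * D2 (x.1 / ε, x.2)) _ :=
        continuousOn_const.mul (hD2c.comp hσ.continuousOn hmaps)
      exact h.congr fun x _ => hη₂ x
    unfold WA
    exact (hη₁c.mul (hφ'c.clm_apply continuous_const).continuousOn).add
      (continuousOn_const.mul (hη₂c.mul (hφ'c.clm_apply continuous_const).continuousOn))
  have hWint : IntegrableOn (WA ε φ η₁ η₂) Ωε := by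
    obtain ⟨MG, hMG⟩ := isCompact_Icc.exists_bound_of_continuousOn
      (hgc.continuousOn (s := Icc (0:ℝ) 1))
    set Kc := {x : ℝ × ℝ | x.1 ∈ Icc (0:ℝ) 1 ∧ 0 ≤ x.2 ∧ x.2 ≤ gA G ε x.1} with hKcdef
    have hKcclosed : IsClosed Kc := by
      rw [hKcdef]
      have h : {x : ℝ × ℝ | x.1 ∈ Icc (0:ℝ) 1 ∧ 0 ≤ x.2 ∧ x.2 ≤ gA G ε x.1}
          = ((fun x : ℝ × ℝ => x.1) ⁻¹' Icc 0 1) ∩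
            ({x : ℝ × ℝ | 0 ≤ x.2} ∩ {x : ℝ × ℝ | x.2 ≤ gA G ε x.1}) := by
        ext x; simp [and_assoc]
      rw [h]
      exact (isClosed_Icc.preimage continuous_fst).inter
        ((isClosed_le continuous_const continuous_snd).inter
          (isClosed_le continuous_snd (hgc.comp continuous_fst)))
    have hKcsub : Kc ⊆ Icc (0:ℝ) 1 ×ˢ Icc (0:ℝ) MG := by
      intro x hx
      refine ⟨hx.1, hx.2.1, le_trans hx.2.2 ?_⟩
      exact le_trans (le_abs_self _) (by simpa [Real.norm_eq_abs] using hMG x.1 hx.1)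
    have hKccomp : IsCompact Kc :=
      (isCompact_Icc.prod isCompact_Icc).of_isClosed_subset hKcclosed hKcsub
    have hΩKc : Ωε ⊆ Kc := by
      intro x hx
      rw [hΩε] at hx
      exact ⟨⟨hx.1.1.le, hx.1.2.le⟩, hx.2.1.le, le_of_lt hx.2.2⟩
    have hKcstrip : Kc ⊆ {x : ℝ × ℝ | 0 ≤ x.2 ∧ x.2 ≤ gA G ε x.1} := fun x hx => hx.2
    exact ((hWcont.mono hKcstrip).integrableOn_compact hKccomp).mono_set hΩKc
  -- the key identity on the shrunk domains
  have key : ∀ δ : ℝ, δ ∈ Ioo (0:ℝ) (1/2) →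
      ∫ x in ΩA G ε δ, WA ε φ η₁ η₂ x
        = (∫ t in (0:ℝ)..1, KA G ε φ D1 D2 (t, 1 - δ))
          - ∫ t in (0:ℝ)..1, KA G ε φ D1 D2 (t, δ) := by
    intro δ hδ
    obtain ⟨hδ0, hδh⟩ := hδ
    have hδ1 : δ < 1 - δ := by linarith
    have hδle : δ ≤ 1 - δ := hδ1.le
    have hδlt1 : (1:ℝ) - δ < 1 := by linarith
    have hδpos' : (0:ℝ) < 1 - δ := by linarith
    -- the shrunk domain is an open subset of Ωε
    have hΩδopen : IsOpen (ΩA G ε δ) := by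
      have h : ΩA G ε δ = ((fun x : ℝ × ℝ => x.1) ⁻¹' Ioo 0 1) ∩
          ({x : ℝ × ℝ | δ * gA G ε x.1 < x.2} ∩ {x : ℝ × ℝ | x.2 < (1 - δ) * gA G ε x.1}) := by
        ext x; simp [ΩA, mem_Ioo, and_assoc]
      rw [h]
      exact (isOpen_Ioo.preimage continuous_fst).inter
        ((isOpen_lt (continuous_const.mul (hgc.comp continuous_fst)) continuous_snd).inter
          (isOpen_lt continuous_snd (continuous_const.mul (hgc.comp continuous_fst))))
    have hΩδmeas : MeasurableSet (ΩA G ε δ) := hΩδopen.measurableSet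
    have hΩδsub : ΩA G ε δ ⊆ Ωε := by
      intro x hx
      obtain ⟨h1, h2, h3⟩ := hx
      rw [hΩε]
      refine ⟨h1, lt_of_le_of_lt (mul_nonneg hδ0.le (hgpos x.1).le) h2, ?_⟩
      show x.2 < G (x.1 / ε)
      have h4 : (1 - δ) * gA G ε x.1 ≤ 1 * gA G ε x.1 :=
        mul_le_mul_of_nonneg_right (by linarith) (hgpos x.1).le
      have h5 : x.2 < gA G ε x.1 := by linarith
      simpa [gA] using h5
    have hWδ : IntegrableOn (WA ε φ η₁ η₂) (ΩA G ε δ) := hWint.mono_set hΩδsub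
    -- step 1 : Fubini, slicing the set integral
    have step1 : ∫ x in ΩA G ε δ, WA ε φ η₁ η₂ x
        = ∫ t in Ioo (0:ℝ) 1, ∫ y in Ioo (δ * gA G ε t) ((1 - δ) * gA G ε t),
            WA ε φ η₁ η₂ (t, y) := by
      rw [← integral_indicator hΩδmeas]
      have hind : Integrable ((ΩA G ε δ).indicator (WA ε φ η₁ η₂))
          ((volume : Measure ℝ).prod (volume : Measure ℝ)) := by
        rw [← Measure.volume_eq_prod]
        exact (integrable_indicator_iff hΩδmeas).2 hWδ
      rw [Measure.volume_eq_prod, integral_prod _ hind, ← integral_indicator measurableSet_Ioo]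
      congr 1
      funext t
      by_cases ht : t ∈ Ioo (0:ℝ) 1
      · rw [indicator_of_mem ht, ← integral_indicator measurableSet_Ioo]
        congr 1
        funext y
        by_cases hy : y ∈ Ioo (δ * gA G ε t) ((1 - δ) * gA G ε t)
        · rw [indicator_of_mem hy, indicator_of_mem (by exact ⟨ht, hy⟩)]
        · rw [indicator_of_notMem hy, indicator_of_notMem (by
            intro hmem; exact hy hmem.2)]
      · rw [indicator_of_notMem ht]
        have hz : ∀ y : ℝ, (ΩA G ε δ).indicator (WA ε φ η₁ η₂) (t, y) = 0 := by
          intro y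
          apply indicator_of_notMem
          intro hmem
          exact ht hmem.1
        simp only [hz, integral_zero]
    -- step 2 : substitution on each slice
    have step2 : ∀ t : ℝ,
        ∫ y in Ioo (δ * gA G ε t) ((1 - δ) * gA G ε t), WA ε φ η₁ η₂ (t, y)
          = ∫ s in Ioc δ (1 - δ), (F1A G ε φ D1 (t, s) + K2A G ε φ D1 D2 (t, s)) := by
      intro t
      have hgt := hgpos t
      have hle2 : δ * gA G ε t ≤ (1 - δ) * gA G ε t :=
        mul_le_mul_of_nonneg_right hδle hgt.le
      have hEq : EqOn (fun s => gA G ε t * WA ε φ η₁ η₂ (t, gA G ε t * s))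
          (fun s => F1A G ε φ D1 (t, s) + K2A G ε φ D1 D2 (t, s)) (uIcc δ (1 - δ)) := by
        intro s hs
        rw [uIcc_of_le hδle] at hs
        have hs' : s ∈ Ioo (0:ℝ) 1 := ⟨lt_of_lt_of_le hδ0 hs.1, lt_of_le_of_lt hs.2 hδlt1⟩
        have h := (hsum (t, s) hs').symm
        show gA G ε t * WA ε φ η₁ η₂ (t, gA G ε t * s) = _
        rw [mul_comm (gA G ε t) s]
        exact h
      calc ∫ y in Ioo (δ * gA G ε t) ((1 - δ) * gA G ε t), WA ε φ η₁ η₂ (t, y)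
          = ∫ y in Ioc (δ * gA G ε t) ((1 - δ) * gA G ε t), WA ε φ η₁ η₂ (t, y) :=
            (integral_Ioc_eq_integral_Ioo).symm
        _ = ∫ y in (δ * gA G ε t)..((1 - δ) * gA G ε t), WA ε φ η₁ η₂ (t, y) :=
            (intervalIntegral.integral_of_le hle2).symm
        _ = ∫ s in δ..(1 - δ), gA G ε t * WA ε φ η₁ η₂ (t, gA G ε t * s) := by
            rw [mul_comm δ (gA G ε t), mul_comm (1 - δ) (gA G ε t),
              ← intervalIntegral.smul_integral_comp_mul_left
                (fun y => WA ε φ η₁ η₂ (t, y)) (gA G ε t),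
              ← intervalIntegral.integral_smul]
            simp only [smul_eq_mul]
        _ = ∫ s in δ..(1 - δ), (F1A G ε φ D1 (t, s) + K2A G ε φ D1 D2 (t, s)) :=
            intervalIntegral.integral_congr hEq
        _ = ∫ s in Ioc δ (1 - δ), (F1A G ε φ D1 (t, s) + K2A G ε φ D1 D2 (t, s)) :=
            intervalIntegral.integral_of_le hδle
    -- step 3 : integrate by parts / Fubini on the rectangle
    have hsubU : (Icc (0:ℝ) 1 ×ˢ Icc δ (1 - δ)) ⊆ {p : ℝ × ℝ | 0 < p.2 ∧ p.2 < 1} :=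
      fun p hp => ⟨lt_of_lt_of_le hδ0 hp.2.1, lt_of_le_of_lt hp.2.2 hδlt1⟩
    have hmapsIcc : ∀ t : ℝ, MapsTo (fun s => ((t, s) : ℝ × ℝ)) (Icc δ (1 - δ))
        {p : ℝ × ℝ | 0 < p.2 ∧ p.2 < 1} := by
      intro t s hs
      exact ⟨lt_of_lt_of_le hδ0 hs.1, lt_of_le_of_lt hs.2 hδlt1⟩
    have hcK2s : ∀ t : ℝ, ContinuousOn (fun s => K2A G ε φ D1 D2 (t, s)) (Icc δ (1 - δ)) := by
      intro t
      exact hK2c.comp (Continuous.continuousOn (by fun_prop)) (hmapsIcc t)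
    have hcF1s : ∀ t : ℝ, ContinuousOn (fun s => F1A G ε φ D1 (t, s)) (Icc δ (1 - δ)) := by
      intro t
      exact hF1c.comp (Continuous.continuousOn (by fun_prop)) (hmapsIcc t)
    have hKslice : ∀ c : ℝ, 0 ≤ c → c ≤ 1 → Continuous fun t => KA G ε φ D1 D2 (t, c) := by
      intro c h0 h1
      rw [continuousOn_univ.symm]
      exact hKc.comp (Continuous.continuousOn (by fun_prop)) (fun t _ => ⟨h0, h1⟩)
    have h1 : ∀ t : ℝ,
        ∫ s in Ioc δ (1 - δ), (F1A G ε φ D1 (t, s) + K2A G ε φ D1 D2 (t, s))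
          = (∫ s in Ioc δ (1 - δ), F1A G ε φ D1 (t, s))
            + (KA G ε φ D1 D2 (t, 1 - δ) - KA G ε φ D1 D2 (t, δ)) := by
      intro t
      have hiF1 : IntegrableOn (fun s => F1A G ε φ D1 (t, s)) (Ioc δ (1 - δ)) :=
        ((hcF1s t).integrableOn_compact isCompact_Icc).mono_set Ioc_subset_Icc_self
      have hiK2 : IntegrableOn (fun s => K2A G ε φ D1 D2 (t, s)) (Ioc δ (1 - δ)) :=
        ((hcK2s t).integrableOn_compact isCompact_Icc).mono_set Ioc_subset_Icc_self
      rw [integral_add hiF1 hiK2]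
      congr 1
      rw [← intervalIntegral.integral_of_le hδle]
      exact intervalIntegral.integral_eq_sub_of_hasDerivAt
        (f := fun u => KA G ε φ D1 D2 (t, u))
        (fun s hs => hKderiv t s (by
          rw [uIcc_of_le hδle] at hs
          exact ⟨lt_of_lt_of_le hδ0 hs.1, lt_of_le_of_lt hs.2 hδlt1⟩))
        (by
          apply ContinuousOn.intervalIntegrable
          rw [uIcc_of_le hδle]
          exact hcK2s t)
    have hF1prod : Integrable (Function.uncurry fun t s => F1A G ε φ D1 (t, s))
        ((volume.restrict (Ioo (0:ℝ) 1)).prod (volume.restrict (Ioc δ (1 - δ)))) := by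
      rw [Measure.prod_restrict]
      have h : IntegrableOn (F1A G ε φ D1) (Ioo (0:ℝ) 1 ×ˢ Ioc δ (1 - δ)) := by
        exact ((hF1c.mono hsubU).integrableOn_compact
          (isCompact_Icc.prod isCompact_Icc)).mono_set
          (prod_mono Ioo_subset_Icc_self Ioc_subset_Icc_self)
      rw [Measure.volume_eq_prod] at h
      exact h
    have hA : IntegrableOn (fun t => ∫ s in Ioc δ (1 - δ), F1A G ε φ D1 (t, s)) (Ioo (0:ℝ) 1) :=
      hF1prod.integral_prod_left
    have hB1 : IntegrableOn (fun t => KA G ε φ D1 D2 (t, 1 - δ)) (Ioo (0:ℝ) 1) :=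
      (((hKslice (1 - δ) hδpos'.le hδlt1.le).continuousOn).integrableOn_compact
        isCompact_Icc).mono_set Ioo_subset_Icc_self
    have hB2 : IntegrableOn (fun t => KA G ε φ D1 D2 (t, δ)) (Ioo (0:ℝ) 1) :=
      (((hKslice δ hδ0.le (by linarith)).continuousOn).integrableOn_compact
        isCompact_Icc).mono_set Ioo_subset_Icc_self
    have hzero : ∀ s ∈ Ioc δ (1 - δ), (∫ t in Ioo (0:ℝ) 1, F1A G ε φ D1 (t, s)) = 0 := by
      intro s hs
      have hs' : s ∈ Ioo (0:ℝ) 1 := ⟨hδ0.trans hs.1, lt_of_le_of_lt hs.2 hδlt1⟩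
      have hIF : IntervalIntegrable (fun t => F1A G ε φ D1 (t, s)) volume 0 1 := by
        apply ContinuousOn.intervalIntegrable
        apply hF1c.comp (Continuous.continuousOn (by fun_prop))
        intro t _
        exact hs'
      have hFTC := intervalIntegral.integral_eq_sub_of_hasDerivAt
        (fun t _ => hFderiv s hs' t) hIF
      have hF1v : FA G ε φ D1 (1, s) = 0 := by
        have h : φ (mA G ε (1, s)) = 0 := hφ0 _ (by norm_num [mA])
        simp [FA, h]
      have hF0v : FA G ε φ D1 (0, s) = 0 := by
        have h : φ (mA G ε (0, s)) = 0 := hφ0 _ (by norm_num [mA])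
        simp [FA, h]
      rw [← integral_Ioc_eq_integral_Ioo, ← intervalIntegral.integral_of_le zero_le_one,
        hFTC, hF1v, hF0v, sub_zero]
    have hFzero : (∫ t in Ioo (0:ℝ) 1, ∫ s in Ioc δ (1 - δ), F1A G ε φ D1 (t, s)) = 0 := by
      have hswap := integral_integral_swap hF1prod
      calc (∫ t in Ioo (0:ℝ) 1, ∫ s in Ioc δ (1 - δ), F1A G ε φ D1 (t, s))
          = ∫ s in Ioc δ (1 - δ), ∫ t in Ioo (0:ℝ) 1, F1A G ε φ D1 (t, s) := hswap
        _ = ∫ s in Ioc δ (1 - δ), (0:ℝ) := setIntegral_congr_fun measurableSet_Ioc hzero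
        _ = 0 := by simp
    calc ∫ x in ΩA G ε δ, WA ε φ η₁ η₂ x
        = ∫ t in Ioo (0:ℝ) 1, ∫ y in Ioo (δ * gA G ε t) ((1 - δ) * gA G ε t),
            WA ε φ η₁ η₂ (t, y) := step1
      _ = ∫ t in Ioo (0:ℝ) 1, ∫ s in Ioc δ (1 - δ),
            (F1A G ε φ D1 (t, s) + K2A G ε φ D1 D2 (t, s)) :=
          setIntegral_congr_fun measurableSet_Ioo (fun t _ => step2 t)
      _ = ∫ t in Ioo (0:ℝ) 1, ((∫ s in Ioc δ (1 - δ), F1A G ε φ D1 (t, s))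
            + (KA G ε φ D1 D2 (t, 1 - δ) - KA G ε φ D1 D2 (t, δ))) :=
          setIntegral_congr_fun measurableSet_Ioo (fun t _ => h1 t)
      _ = (∫ t in Ioo (0:ℝ) 1, ∫ s in Ioc δ (1 - δ), F1A G ε φ D1 (t, s))
            + ∫ t in Ioo (0:ℝ) 1, (KA G ε φ D1 D2 (t, 1 - δ) - KA G ε φ D1 D2 (t, δ)) :=
          integral_add hA (hB1.sub hB2)
      _ = ∫ t in Ioo (0:ℝ) 1, (KA G ε φ D1 D2 (t, 1 - δ) - KA G ε φ D1 D2 (t, δ)) := by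
          rw [hFzero, zero_add]
      _ = (∫ t in Ioo (0:ℝ) 1, KA G ε φ D1 D2 (t, 1 - δ))
            - ∫ t in Ioo (0:ℝ) 1, KA G ε φ D1 D2 (t, δ) := integral_sub hB1 hB2
      _ = (∫ t in (0:ℝ)..1, KA G ε φ D1 D2 (t, 1 - δ))
            - ∫ t in (0:ℝ)..1, KA G ε φ D1 D2 (t, δ) := by
          rw [intervalIntegral.integral_of_le zero_le_one,
            intervalIntegral.integral_of_le zero_le_one,
            integral_Ioc_eq_integral_Ioo, integral_Ioc_eq_integral_Ioo]
  -- the sequence of δ's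
  set δs : ℕ → ℝ := fun n => 1 / (n + 4) with hδs
  have hδpos : ∀ n, 0 < δs n := by
    intro n; apply div_pos one_pos; positivity
  have hδhalf : ∀ n, δs n < 1 / 2 := by
    intro n
    rw [hδs]
    apply div_lt_div_of_pos_left one_pos two_pos
    have h : (0:ℝ) ≤ n := Nat.cast_nonneg n
    linarith
  have hδanti : ∀ m n : ℕ, m ≤ n → δs n ≤ δs m := by
    intro m n hmn
    apply one_div_le_one_div_of_le
    · positivity
    · have h : (m:ℝ) ≤ n := Nat.cast_le.2 hmn
      linarith
  have hδlim : Tendsto δs atTop (𝓝 0) := by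
    rw [hδs]
    simp only [one_div]
    exact Tendsto.comp tendsto_inv_atTop_zero
      (tendsto_atTop_add_const_right _ _ tendsto_natCast_atTop_atTop)
  -- monotone convergence of the domains
  have hΩmono : Monotone fun n => ΩA G ε (δs n) := by
    intro m n hmn x hx
    obtain ⟨h1, h2⟩ := hx
    refine ⟨h1, ?_, ?_⟩
    · calc δs n * gA G ε x.1 ≤ δs m * gA G ε x.1 :=
            mul_le_mul_of_nonneg_right (hδanti m n hmn) (hgpos x.1).le
        _ < x.2 := h2.1
    · calc x.2 < (1 - δs m) * gA G ε x.1 := h2.2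
        _ ≤ (1 - δs n) * gA G ε x.1 := by
            apply mul_le_mul_of_nonneg_right _ (hgpos x.1).le
            linarith [hδanti m n hmn]
  have hΩunion : (⋃ n, ΩA G ε (δs n)) = Ωε := by
    ext x
    simp only [mem_iUnion, hΩε, ΩA, mem_setOf_eq, mem_Ioo]
    constructor
    · rintro ⟨n, h1, h2, h3⟩
      refine ⟨h1, ?_, ?_⟩
      · exact lt_of_le_of_lt (mul_nonneg (hδpos n).le (hgpos x.1).le) h2
      · show x.2 < G (x.1 / ε)
        have h4 : (1 - δs n) * gA G ε x.1 ≤ 1 * gA G ε x.1 :=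
          mul_le_mul_of_nonneg_right (by linarith [hδpos n]) (hgpos x.1).le
        have h5 : x.2 < gA G ε x.1 := by linarith
        simpa [gA] using h5
    · rintro ⟨h1, h2, h3⟩
      have h3' : x.2 < gA G ε x.1 := h3
      have hc : 0 < min x.2 (gA G ε x.1 - x.2) / gA G ε x.1 :=
        div_pos (lt_min h2 (by linarith)) (hgpos x.1)
      obtain ⟨n, hn⟩ := (hδlim.eventually_lt_const hc).exists
      have hmin := (lt_div_iff₀ (hgpos x.1)).1 hn
      have ha := lt_of_lt_of_le hmin (min_le_left _ _)
      have hb := lt_of_lt_of_le hmin (min_le_right _ _)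
      exact ⟨n, h1, ha, by nlinarith⟩
  have hΩδmeas : ∀ n, MeasurableSet (ΩA G ε (δs n)) := by
    intro n
    have h : ΩA G ε (δs n) = ((fun x : ℝ × ℝ => x.1) ⁻¹' Ioo 0 1) ∩
        ({x : ℝ × ℝ | δs n * gA G ε x.1 < x.2}
          ∩ {x : ℝ × ℝ | x.2 < (1 - δs n) * gA G ε x.1}) := by
      ext x; simp [ΩA, mem_Ioo, and_assoc]
    rw [h]
    exact ((isOpen_Ioo.preimage continuous_fst).inter
      ((isOpen_lt (continuous_const.mul (hgc.comp continuous_fst)) continuous_snd).inter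
        (isOpen_lt continuous_snd
          (continuous_const.mul (hgc.comp continuous_fst))))).measurableSet
  have hlim1 : Tendsto (fun n => ∫ x in ΩA G ε (δs n), WA ε φ η₁ η₂ x) atTop
      (𝓝 (∫ x in Ωε, WA ε φ η₁ η₂ x)) := by
    have h := tendsto_setIntegral_of_monotone hΩδmeas hΩmono (hΩunion ▸ hWint)
    rwa [hΩunion] at h
  -- boundary integrals tend to zero
  have hlimTB : Tendsto (fun n => ∫ t in (0:ℝ)..1, KA G ε φ D1 D2 (t, δs n)) atTop (𝓝 0)
      ∧ Tendsto (fun n => ∫ t in (0:ℝ)..1, KA G ε φ D1 D2 (t, 1 - δs n)) atTop (𝓝 0) := by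
    obtain ⟨CK, hCK⟩ := (isCompact_Icc.prod isCompact_Icc).exists_bound_of_continuousOn
      (hKc.mono (fun p (hp : p ∈ Icc (0:ℝ) 1 ×ˢ Icc (0:ℝ) 1) => ⟨hp.2.1, hp.2.2⟩))
    have hKsliceC : ∀ c : ℝ, 0 ≤ c → c ≤ 1 → Continuous fun t => KA G ε φ D1 D2 (t, c) := by
      intro c h0 h1
      rw [continuousOn_univ.symm]
      exact hKc.comp (Continuous.continuousOn (by fun_prop)) (fun t _ => ⟨h0, h1⟩)
    have hmain : ∀ (σ : ℕ → ℝ), (∀ n, σ n ∈ Icc (0:ℝ) 1) → ∀ c ∈ Icc (0:ℝ) 1,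
        Tendsto σ atTop (𝓝 c) → (∀ t, KA G ε φ D1 D2 (t, c) = 0) →
        Tendsto (fun n => ∫ t in (0:ℝ)..1, KA G ε φ D1 D2 (t, σ n)) atTop (𝓝 0) := by
      intro σ hσmem c hc hσlim hKcz
      have heq : ∀ n, ∫ t in (0:ℝ)..1, KA G ε φ D1 D2 (t, σ n)
          = ∫ t in Ioc (0:ℝ) 1, KA G ε φ D1 D2 (t, σ n) :=
        fun n => intervalIntegral.integral_of_le zero_le_one
      simp only [heq]
      have hDCT : Tendsto (fun n => ∫ t in Ioc (0:ℝ) 1, KA G ε φ D1 D2 (t, σ n)) atTop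
          (𝓝 (∫ t in Ioc (0:ℝ) 1, (0:ℝ))) := by
        apply tendsto_integral_of_dominated_convergence (fun _ => CK)
        · intro n
          exact ((hKsliceC (σ n) (hσmem n).1 (hσmem n).2).aestronglyMeasurable).restrict
        · exact integrableOn_const (by simp [Real.volume_Ioc])
        · intro n
          refine (ae_restrict_iff' measurableSet_Ioc).2 (Eventually.of_forall fun t ht => ?_)
          exact hCK (t, σ n) ⟨⟨ht.1.le, ht.2⟩, hσmem n⟩
        · refine (ae_restrict_iff' measurableSet_Ioc).2 (Eventually.of_forall fun t _ => ?_)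
          have hctsv : ContinuousOn (fun s => KA G ε φ D1 D2 (t, s)) (Icc (0:ℝ) 1) := by
            apply hKc.comp (Continuous.continuousOn (by fun_prop))
            intro s hs
            exact ⟨hs.1, hs.2⟩
          have hcw : ContinuousWithinAt (fun s => KA G ε φ D1 D2 (t, s)) (Icc (0:ℝ) 1) c :=
            hctsv c hc
          have htendin : Tendsto σ atTop (𝓝[Icc (0:ℝ) 1] c) :=
            tendsto_nhdsWithin_iff.2 ⟨hσlim, Eventually.of_forall hσmem⟩
          have h := hcw.tendsto.comp htendin
          rwa [hKcz t] at h
      simpa using hDCT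
    constructor
    · exact hmain δs (fun n => ⟨(hδpos n).le, by linarith [hδhalf n]⟩) 0
        ⟨le_refl 0, zero_le_one⟩ hδlim hK0
    · exact hmain (fun n => 1 - δs n)
        (fun n => ⟨by show (0:ℝ) ≤ 1 - δs n; linarith [hδhalf n],
          by show (1:ℝ) - δs n ≤ 1; linarith [hδpos n]⟩) 1
        ⟨zero_le_one, le_refl 1⟩
        (by simpa using (tendsto_const_nhds (x := (1:ℝ))).sub hδlim) hK1
  -- conclusion
  have hlim2 : Tendsto (fun n => ∫ x in ΩA G ε (δs n), WA ε φ η₁ η₂ x) atTop (𝓝 0) := by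
    have heq : (fun n => ∫ x in ΩA G ε (δs n), WA ε φ η₁ η₂ x)
        = fun n => (∫ t in (0:ℝ)..1, KA G ε φ D1 D2 (t, 1 - δs n))
          - ∫ t in (0:ℝ)..1, KA G ε φ D1 D2 (t, δs n) := by
      funext n; exact key (δs n) ⟨hδpos n, hδhalf n⟩
    rw [heq]
    simpa using hlimTB.2.sub hlimTB.1
  exact tendsto_nhds_unique hlim1 hlim2
end
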